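/- arXiv:1511.04683 — 5 statements merged into one kernel-verified Lean document; each statement's English description precedes it below -/
import Mathlib

section
/- Let v : ℝ → ℝ satisfy c₁ e^{-β|ξ|^α} ≤ v(ξ) ≤ c₂ e^{-β|ξ|^α} with α, β > 0 and c₁, c₂ > 0. Then there is C > 0 such that |∫₀^ξ v(η)^{-2/n} dη| ≤ C e^{2β|ξ|^α/n} (1+|ξ|)^{1-α} for all ξ ∈ ℝ. In particular, if α ≥ 1 then v(ξ)² ≤ C' |∫₀^ξ v(η)^{-2/n} dη|^{-n} for |ξ| large. -/
/-!
Put `γ = 2β/n` and `e(t) = exp (γ t^α)`. The integrand is at most `c₁^(-2/n) e(|η|)`, so it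
suffices to bound `∫₀ᵗ e` for `t ≥ 0`. The derivative of `e(t) t^(1-α)` is
`e(t) (γα + (1-α) t^(-α))`, which is at least `(γα/2) e(t)` for large `t`; hence
`∫₀ᵗ e = O(e(t) (1+t)^(1-α))` at infinity, and continuity on compact intervals turns this
into a bound on all of `[0, ∞)`. For `α ≥ 1` the exponentials cancel in
`v(ξ)² |∫₀^ξ v^(-2/n)|ⁿ` and `(1+|ξ|)^(n(1-α)) ≤ 1`.
-/

open Real Filter Topology Asymptotics Set MeasureTheory intervalIntegral

theorem isBigO_principal_Ici_of_isBigO_atTop {α E F : Type*} [LinearOrder α]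
    [TopologicalSpace α] [CompactIccSpace α] [SeminormedAddCommGroup E] [NormedAddCommGroup F]
    {f : α → E} {g : α → F} {b : α}
    (hf : ContinuousOn f (Ici b)) (hg : ContinuousOn g (Ici b)) (hg₀ : ∀ x ∈ Ici b, g x ≠ 0)
    (h : f =O[atTop] g) : f =O[𝓟 (Ici b)] g := by
  have : Nonempty α := ⟨b⟩
  obtain ⟨c, hc⟩ := h.bound
  obtain ⟨a, ha⟩ := eventually_atTop.1 hc
  have htail : f =O[𝓟 (Ici a)] g := isBigO_principal.2 ⟨c, ha⟩
  have hhead : f =O[𝓟 (Icc b a)] g :=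
    ((hf.mono Icc_subset_Ici_self).isBigO_principal isCompact_Icc (c := (1 : ℝ))
      (by norm_num)).trans
      ((hg.mono Icc_subset_Ici_self).isBigO_rev_principal isCompact_Icc
        (fun x hx => hg₀ x hx.1) (1 : ℝ))
  refine (hhead.sup htail).mono ?_
  rw [sup_principal, principal_mono]
  intro x hx
  rcases le_total x a with hxa | hax
  exacts [Or.inl ⟨hx, hxa⟩, Or.inr hax]

theorem isTheta_rpow_one_add_atTop (r : ℝ) :
    (fun t : ℝ => t ^ r) =Θ[atTop] fun t => (1 + t) ^ r := by
  have h : (fun t : ℝ => 1 + t) ~[atTop] id := by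
    have := (IsEquivalent.refl (u := id) (l := atTop)).add_isLittleO
      (isLittleO_const_id_atTop (1 : ℝ))
    simpa [Pi.add_def, add_comm] using this
  exact h.isTheta_symm.rpow (eventually_ge_atTop 0) ((eventually_ge_atTop 0).mono fun t ht => by
    change (0 : ℝ) ≤ 1 + t; linarith)

theorem eventually_le_add_mul_rpow_neg {c c' d α : ℝ} (hc : c' < c) (hα : 0 < α) :
    ∀ᶠ x in atTop, c' ≤ c + d * x ^ (-α) := by
  have : Tendsto (fun x : ℝ => c + d * x ^ (-α)) atTop (𝓝 (c + d * 0)) :=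
    tendsto_const_nhds.add (tendsto_const_nhds.mul (tendsto_rpow_neg_atTop hα))
  rw [mul_zero, add_zero] at this
  exact (this.eventually_const_lt hc).mono fun _ => le_of_lt

theorem continuous_exp_mul_rpow (γ : ℝ) {α : ℝ} (hα : 0 < α) :
    Continuous fun t : ℝ => exp (γ * t ^ α) := by
  fun_prop (disch := exact hα.le)

theorem hasDerivAt_exp_mul_rpow_mul_rpow (γ α : ℝ) {x : ℝ} (hx : 0 < x) :
    HasDerivAt (fun t => exp (γ * t ^ α) * t ^ (1 - α))
      (exp (γ * x ^ α) * (γ * α + (1 - α) * x ^ (-α))) x := by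
  have hexp := ((hasDerivAt_rpow_const (p := α) (Or.inl hx.ne')).const_mul γ).exp
  refine (hexp.mul (hasDerivAt_rpow_const (p := 1 - α) (Or.inl hx.ne'))).congr_deriv ?_
  have : x ^ (α - 1) * x ^ (1 - α) = 1 := by rw [← rpow_add hx]; norm_num
  rw [show (1 : ℝ) - α - 1 = -α by ring]
  linear_combination (γ * α * exp (γ * x ^ α)) * this

theorem isBigO_integral_exp_mul_rpow_atTop {γ α : ℝ} (hγ : 0 < γ) (hα : 0 < α) :
    (fun t => ∫ η in (0 : ℝ)..t, exp (γ * η ^ α)) =O[atTop]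
      fun t => exp (γ * t ^ α) * t ^ (1 - α) := by
  set F : ℝ → ℝ := fun t => exp (γ * t ^ α) * t ^ (1 - α)
  have hcont := continuous_exp_mul_rpow γ hα
  obtain ⟨a, ha⟩ := eventually_atTop.1 ((eventually_le_add_mul_rpow_neg (d := 1 - α)
    (half_lt_self (by positivity : 0 < γ * α)) hα).and (eventually_gt_atTop 0))
  have hapos : 0 < a := (ha a le_rfl).2
  have htail : ∀ t ≥ a, γ * α / 2 * ∫ η in a..t, exp (γ * η ^ α) ≤ F t - F a := by
    intro t ht
    have hderiv : ∀ x ∈ Icc a t,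
        HasDerivAt F (exp (γ * x ^ α) * (γ * α + (1 - α) * x ^ (-α))) x :=
      fun x hx => hasDerivAt_exp_mul_rpow_mul_rpow γ α (hapos.trans_le hx.1)
    rw [← intervalIntegral.integral_const_mul]
    refine integral_le_sub_of_hasDeriv_right_of_le ht
      (fun x hx => (hderiv x hx).continuousAt.continuousWithinAt)
      (fun x hx => (hderiv x (Ioo_subset_Icc_self hx)).hasDerivWithinAt)
      (continuous_const.mul hcont).integrableOn_Icc fun x hx => ?_
    rw [mul_comm]
    exact mul_le_mul_of_nonneg_left (ha x hx.1.le).1 (exp_pos _).le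
  have hFa : 0 < F a := by positivity
  set K := ∫ η in (0 : ℝ)..a, exp (γ * η ^ α)
  have hK : 0 ≤ K := integral_nonneg hapos.le fun _ _ => (exp_pos _).le
  refine IsBigO.of_bound (K / F a + 2 / (γ * α)) ?_
  filter_upwards [eventually_ge_atTop a] with t ht
  have hI : 0 ≤ ∫ η in a..t, exp (γ * η ^ α) := integral_nonneg ht fun _ _ => (exp_pos _).le
  have hI₂ : 0 ≤ γ * α / 2 * ∫ η in a..t, exp (γ * η ^ α) := by positivity
  have hFt : F a ≤ F t := by linarith [htail t ht]
  have hI' : ∫ η in a..t, exp (γ * η ^ α) ≤ 2 / (γ * α) * F t := by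
    rw [div_mul_eq_mul_div, le_div_iff₀ (by positivity)]
    linarith [htail t ht]
  have hK' : K ≤ K / F a * F t := by
    rw [div_mul_eq_mul_div, le_div_iff₀ hFa]; exact mul_le_mul_of_nonneg_left hFt hK
  rw [← integral_add_adjacent_intervals (hcont.intervalIntegrable 0 a)
    (hcont.intervalIntegrable a t), norm_of_nonneg (add_nonneg hK hI),
    norm_of_nonneg (hFa.le.trans hFt)]
  linarith

theorem exists_integral_exp_mul_rpow_le {γ α : ℝ} (hγ : 0 < γ) (hα : 0 < α) :
    ∃ C > 0, ∀ t ≥ 0, ∫ η in (0 : ℝ)..t, exp (γ * η ^ α) ≤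
      C * (exp (γ * t ^ α) * (1 + t) ^ (1 - α)) := by
  have hcont := continuous_exp_mul_rpow γ hα
  have hO := (isBigO_integral_exp_mul_rpow_atTop hγ hα).trans
    ((isTheta_refl (fun t => exp (γ * t ^ α)) atTop).mul
      (isTheta_rpow_one_add_atTop (1 - α))).isBigO
  have hH : ContinuousOn (fun t : ℝ => exp (γ * t ^ α) * (1 + t) ^ (1 - α)) (Ici 0) := by
    refine hcont.continuousOn.mul fun t (ht : 0 ≤ t) => ContinuousAt.continuousWithinAt ?_
    exact (continuous_const_add 1).continuousAt.rpow_const (Or.inl (by positivity))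
  obtain ⟨C, hC, hCO⟩ := (isBigO_principal_Ici_of_isBigO_atTop
    (continuous_primitive (fun a b => hcont.intervalIntegrable a b) 0).continuousOn hH
    (fun t ht => by simp only [mem_Ici] at ht; positivity) hO).exists_pos
  refine ⟨C, hC, fun t ht => ?_⟩
  have h := isBigOWith_principal.1 hCO t ht
  rwa [norm_of_nonneg (integral_nonneg ht fun _ _ => (exp_pos _).le),
    norm_of_nonneg (by positivity)] at h

theorem abs_integral_le_integral_of_abs_le_comp_abs {f g : ℝ → ℝ}
    (hg : ∀ t, IntervalIntegrable g volume 0 t) (hfg : ∀ x, |f x| ≤ g |x|) (ξ : ℝ) :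
    |∫ x in (0 : ℝ)..ξ, f x| ≤ ∫ x in (0 : ℝ)..|ξ|, g x := by
  have key : ∀ f : ℝ → ℝ, (∀ x, |f x| ≤ g |x|) → ∀ t ≥ 0,
      |∫ x in (0 : ℝ)..t, f x| ≤ ∫ x in (0 : ℝ)..t, g x := fun f hfg t ht =>
    norm_integral_le_of_norm_le (f := f) ht (Eventually.of_forall fun x hx => by
      simpa [abs_of_pos hx.1] using hfg x) (hg t)
  rcases le_total 0 ξ with hξ | hξ
  · rw [abs_of_nonneg hξ]
    exact key f hfg ξ hξ
  · have hneg : ∫ x in (0 : ℝ)..ξ, f x = -∫ x in (0 : ℝ)..-ξ, f (-x) := by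
      rw [integral_comp_neg, neg_zero, neg_neg, integral_symm]
    rw [abs_of_nonpos hξ, hneg, abs_neg]
    exact key (fun x => f (-x)) (fun x => by simpa using hfg (-x)) (-ξ) (by linarith)

theorem rpow_le_of_mul_exp_neg_le {x c β s p : ℝ} (hc : 0 < c) (hp : p ≤ 0)
    (h : c * exp (-β * s) ≤ x) : x ^ p ≤ c ^ p * exp (-p * β * s) := by
  calc x ^ p ≤ (c * exp (-β * s)) ^ p := rpow_le_rpow_of_nonpos (by positivity) h hp
    _ = c ^ p * exp (-p * β * s) := by
      rw [mul_rpow hc.le (exp_pos _).le, ← exp_mul]; ring_nf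

theorem exists_abs_integral_rpow_le {v : ℝ → ℝ} {α β c p : ℝ} (hα : 0 < α)
    (hβ : 0 < β) (hc : 0 < c) (hp : p < 0) (hlow : ∀ ξ, c * exp (-β * |ξ| ^ α) ≤ v ξ) :
    ∃ C > 0, ∀ ξ, |∫ η in (0 : ℝ)..ξ, v η ^ p| ≤
      C * exp (-p * β * |ξ| ^ α) * (1 + |ξ|) ^ (1 - α) := by
  obtain ⟨C, hC, hCint⟩ := exists_integral_exp_mul_rpow_le (mul_pos (neg_pos.2 hp) hβ) hα
  refine ⟨c ^ p * C, by positivity, fun ξ => ?_⟩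
  have hpw (η : ℝ) : |v η ^ p| ≤ c ^ p * exp (-p * β * |η| ^ α) := by
    rw [abs_of_nonneg (rpow_nonneg ((by positivity : 0 < c * exp _).le.trans (hlow η)) _)]
    exact rpow_le_of_mul_exp_neg_le hc hp.le (hlow η)
  calc |∫ η in (0 : ℝ)..ξ, v η ^ p|
      ≤ ∫ η in (0 : ℝ)..|ξ|, c ^ p * exp (-p * β * η ^ α) :=
        abs_integral_le_integral_of_abs_le_comp_abs
          (fun t => (continuous_const.mul (continuous_exp_mul_rpow _ hα)).intervalIntegrable 0 t)
          hpw ξ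
    _ = c ^ p * ∫ η in (0 : ℝ)..|ξ|, exp (-p * β * η ^ α) := integral_const_mul _ _
    _ ≤ c ^ p * (C * (exp (-p * β * |ξ| ^ α) * (1 + |ξ|) ^ (1 - α))) := by
        gcongr
        exact hCint _ (abs_nonneg ξ)
    _ = _ := by ring

theorem sq_mul_pow_le_of_le_exp {x y a b β s w : ℝ} {n : ℕ} (hn : n ≠ 0) (hx₀ : 0 ≤ x)
    (hx : x ≤ a * exp (-β * s)) (hy₀ : 0 ≤ y) (hy : y ≤ b * exp (2 * β * s / n) * w)
    (hb : 0 ≤ b) (hw₀ : 0 ≤ w) (hw : w ≤ 1) : x ^ 2 * y ^ n ≤ a ^ 2 * b ^ n := by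
  have hexp : exp (-β * s) ^ 2 * exp (2 * β * s / n) ^ n = 1 := by
    rw [← exp_nat_mul, ← exp_nat_mul, ← exp_add, exp_eq_one_iff]
    field_simp
    ring
  calc x ^ 2 * y ^ n ≤ (a * exp (-β * s)) ^ 2 * (b * exp (2 * β * s / n) * w) ^ n := by gcongr
    _ = a ^ 2 * b ^ n * (exp (-β * s) ^ 2 * exp (2 * β * s / n) ^ n) * w ^ n := by ring
    _ ≤ a ^ 2 * b ^ n := by
        rw [hexp, mul_one]
        exact mul_le_of_le_one_right (by positivity) (pow_le_one₀ hw₀ hw)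

theorem stmt_6_general (v : ℝ → ℝ) (α β c₁ c₂ : ℝ)
    (hα : 0 < α) (hβ : 0 < β) (hc₁ : 0 < c₁) (hc₂ : 0 < c₂) (n : ℕ) (hn : 1 ≤ n)
    (hlow : ∀ ξ : ℝ, c₁ * Real.exp (-β * |ξ| ^ α) ≤ v ξ)
    (hup : ∀ ξ : ℝ, v ξ ≤ c₂ * Real.exp (-β * |ξ| ^ α)) :
    (∃ C > (0:ℝ), ∀ ξ : ℝ,
      |∫ η in (0:ℝ)..ξ, v η ^ (-(2:ℝ) / (n:ℝ))| ≤
        C * Real.exp (2 * β * |ξ| ^ α / (n:ℝ)) * (1 + |ξ|) ^ (1 - α)) ∧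
    (1 ≤ α → ∃ C' > (0:ℝ), ∃ R : ℝ, ∀ ξ : ℝ, R ≤ |ξ| →
      v ξ ^ (2:ℕ) * |∫ η in (0:ℝ)..ξ, v η ^ (-(2:ℝ) / (n:ℝ))| ^ (n:ℕ) ≤ C') := by
  have hn₀ : (0 : ℝ) < n := by exact_mod_cast hn
  obtain ⟨C, hC, hbound⟩ := exists_abs_integral_rpow_le (p := -2 / n) hα hβ hc₁
    (div_neg_of_neg_of_pos (by norm_num) hn₀) hlow
  have hexponent (ξ : ℝ) : -(-2 / n) * β * |ξ| ^ α = 2 * β * |ξ| ^ α / n := by ring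
  simp only [hexponent] at hbound
  refine ⟨⟨C, hC, hbound⟩, fun hα₁ => ⟨c₂ ^ 2 * C ^ n, by positivity, 0, fun ξ _ => ?_⟩⟩
  have hv₀ : 0 ≤ v ξ := (by positivity : 0 ≤ c₁ * exp (-β * |ξ| ^ α)).trans (hlow ξ)
  exact sq_mul_pow_le_of_le_exp (by omega) hv₀ (hup ξ) (abs_nonneg _) (hbound ξ) hC.le
    (by positivity) (rpow_le_one_of_one_le_of_nonpos (by simp) (by linarith))

/-- For `v` with `c₁ e^{-β|ξ|^α} ≤ v(ξ) ≤ c₂ e^{-β|ξ|^α}`, `α, β > 0`: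
`|∫₀^ξ v^{-2/n}| ≤ C e^{2β|ξ|^α/n}(1+|ξ|)^{1-α}`, and if `α ≥ 1` then
`v(ξ)² |∫₀^ξ v^{-2/n}|^{n} ≤ C'` for `|ξ|` large. -/
theorem stmt_6 (v : ℝ → ℝ) (hv : Continuous v) (α β c₁ c₂ : ℝ)
    (hα : 0 < α) (hβ : 0 < β) (hc₁ : 0 < c₁) (hc₂ : 0 < c₂) (n : ℕ) (hn : 1 ≤ n)
    (hlow : ∀ ξ : ℝ, c₁ * Real.exp (-β * |ξ| ^ α) ≤ v ξ)
    (hup : ∀ ξ : ℝ, v ξ ≤ c₂ * Real.exp (-β * |ξ| ^ α)) :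
    (∃ C > (0:ℝ), ∀ ξ : ℝ,
      |∫ η in (0:ℝ)..ξ, v η ^ (-(2:ℝ) / (n:ℝ))| ≤
        C * Real.exp (2 * β * |ξ| ^ α / (n:ℝ)) * (1 + |ξ|) ^ (1 - α)) ∧
    (1 ≤ α → ∃ C' > (0:ℝ), ∃ R : ℝ, ∀ ξ : ℝ, R ≤ |ξ| →
      v ξ ^ (2:ℕ) * |∫ η in (0:ℝ)..ξ, v η ^ (-(2:ℝ) / (n:ℝ))| ^ (n:ℕ) ≤ C') :=
  stmt_6_general v α β c₁ c₂ hα hβ hc₁ hc₂ n hn hlow hup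
end

section
/- Define x(ξ) = π^{-1/n} ∫₀^ξ (cosh(πs))^{1/n} ds for an integer n ≥ 1. Then x is an odd, strictly increasing smooth bijection of ℝ onto ℝ, and as ξ → +∞, x(ξ) = a₀^{-1} e^{πξ/n} + a₁ + O(e^{-π(2n-1)ξ/n}), where a₀ = π (2π)^{1/n} n^{-1} and a₁ = (2π)^{-1/n} ∫₀^∞ ((2cosh(πξ))^{1/n} - e^{πξ/n}) dξ - π^{-1}(2π)^{-1/n} n. -/
open Real MeasureTheory Set Filter intervalIntegral
open scoped NNReal ENNReal

/-- A primitive of a continuous function which is analytic at a point is analytic there. -/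
lemma stmt10_analyticAt_primitive {f : ℝ → ℝ} (hfc : Continuous f) {x₀ : ℝ} (a : ℝ)
    (hf : AnalyticAt ℝ f x₀) : AnalyticAt ℝ (fun u => ∫ s in a..u, f s) x₀ := by
  obtain ⟨p, r, hpr⟩ := hf
  obtain ⟨ρ, hρ0, hρr⟩ := ENNReal.lt_iff_exists_nnreal_btwn.1 hpr.r_pos
  rw [ENNReal.coe_pos] at hρ0
  set F : ℝ → ℝ := fun u => ∫ s in a..u, f s with hF
  set A : ℕ → ℝ := fun n => p.coeff n with hA
  set c : ℕ → ℝ := fun n => Nat.rec (F x₀) (fun k _ => A k / (k + 1)) n with hc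
  have hc0 : c 0 = F x₀ := rfl
  have hcs : ∀ k : ℕ, c (k + 1) = A k / ((k : ℝ) + 1) := fun k => rfl
  have hAle : ∀ n, |A n| ≤ ‖p n‖ := by
    intro n
    have h := (p n).le_opNorm (fun _ => (1:ℝ))
    simp only [norm_one, Finset.prod_const, one_pow, mul_one] at h
    calc |A n| = ‖p n (fun _ => (1:ℝ))‖ := by rw [← Real.norm_eq_abs]; rfl
      _ ≤ ‖p n‖ := h
  have hS1 : Summable fun n => ‖p n‖ * (ρ:ℝ) ^ n :=
    p.summable_norm_mul_pow (lt_of_lt_of_le hρr hpr.r_le)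
  have hSc : Summable fun n => |c n| * (ρ:ℝ) ^ n := by
    rw [← summable_nat_add_iff 1]
    refine Summable.of_nonneg_of_le (fun n => by positivity) (fun n => ?_) (hS1.mul_right (ρ:ℝ))
    rw [hcs, pow_succ]
    have h1 : |A n / ((n:ℝ) + 1)| ≤ ‖p n‖ := by
      rw [abs_div, abs_of_nonneg (by positivity : (0:ℝ) ≤ (n:ℝ) + 1)]
      exact (div_le_self (abs_nonneg _) (by simp)).trans (hAle n)
    have h2 : (0:ℝ) ≤ (ρ:ℝ) ^ n * ρ := by positivity
    nlinarith [mul_le_mul_of_nonneg_right h1 h2]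
  set q : FormalMultilinearSeries ℝ ℝ ℝ := FormalMultilinearSeries.ofScalars ℝ c with hq
  have hqn : ∀ n, ‖q n‖ = |c n| := by
    intro n
    rw [hq, FormalMultilinearSeries.ofScalars_norm, Real.norm_eq_abs]
  have hrle : (ρ : ℝ≥0∞) ≤ q.radius := by
    apply q.le_radius_of_summable_norm
    simpa only [hqn] using hSc
  have hmain : HasFPowerSeriesOnBall F q x₀ ρ := by
    refine ⟨hrle, ENNReal.coe_pos.2 hρ0, ?_⟩
    intro y hy
    rw [mem_emetric_ball_zero_iff] at hy
    have hy' : ‖y‖₊ < ρ := by exact_mod_cast hy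
    have hyρ : |y| < (ρ:ℝ) := by
      rw [← Real.norm_eq_abs, ← coe_nnnorm]; exact_mod_cast hy'
    have hmem : ∀ t ∈ Set.uIoc (0:ℝ) y, |t| < (ρ:ℝ) := by
      intro t ht
      rcases Set.mem_uIoc.1 ht with ⟨h1, h2⟩ | ⟨h1, h2⟩
      · rw [abs_of_pos h1]; exact lt_of_le_of_lt (h2.trans (le_abs_self y)) hyρ
      · rw [abs_of_nonpos h2]
        exact lt_of_le_of_lt ((neg_le_neg h1.le).trans (neg_le_abs y)) hyρ
    have hpt : ∀ t : ℝ, |t| < (ρ:ℝ) → HasSum (fun n => A n * t ^ n) (f (x₀ + t)) := by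
      intro t ht
      have htr : (‖t‖₊ : ℝ≥0∞) < r := by
        refine lt_trans ?_ hρr
        rw [ENNReal.coe_lt_coe, ← NNReal.coe_lt_coe, coe_nnnorm, Real.norm_eq_abs]
        exact ht
      have h2 := hpr.hasSum (by rwa [mem_emetric_ball_zero_iff])
      have h3 : (fun n => p n fun _ => t) = fun n => A n * t ^ n := by
        funext n
        rw [FormalMultilinearSeries.apply_eq_pow_smul_coeff, smul_eq_mul]
        ring
      rwa [h3] at h2
    have hint : HasSum (fun n => ∫ t in (0:ℝ)..y, A n * t ^ n)
        (∫ t in (0:ℝ)..y, f (x₀ + t)) := by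
      apply intervalIntegral.hasSum_integral_of_dominated_convergence
        (bound := fun n _ => |A n| * (ρ:ℝ) ^ n)
      · exact fun n => ((continuous_const.mul (continuous_pow n)).aestronglyMeasurable)
      · intro n
        filter_upwards with t ht
        rw [Real.norm_eq_abs, abs_mul, abs_pow]
        exact mul_le_mul_of_nonneg_left
          (pow_le_pow_left₀ (abs_nonneg _) (hmem t ht).le n) (abs_nonneg _)
      · filter_upwards with t _
        refine Summable.of_nonneg_of_le (fun n => by positivity) (fun n => ?_) hS1
        exact mul_le_mul_of_nonneg_right (hAle n) (by positivity)
      · exact intervalIntegrable_const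
      · filter_upwards with t ht
        exact hpt t (hmem t ht)
    have hint2 : HasSum (fun n => c (n + 1) * y ^ (n + 1)) (∫ t in (0:ℝ)..y, f (x₀ + t)) := by
      have h5 : (fun n => ∫ t in (0:ℝ)..y, A n * t ^ n)
          = fun n => c (n + 1) * y ^ (n + 1) := by
        funext n
        rw [intervalIntegral.integral_const_mul, integral_pow, hcs]
        have h0 : ((0:ℝ)) ^ (n + 1) = 0 := zero_pow (Nat.succ_ne_zero n)
        rw [h0]
        ring
      rwa [h5] at hint
    have hFsplit : F (x₀ + y) = F x₀ + ∫ t in (0:ℝ)..y, f (x₀ + t) := by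
      have h6 : (∫ t in (0:ℝ)..y, f (x₀ + t)) = ∫ s in x₀..(x₀ + y), f s := by
        rw [intervalIntegral.integral_comp_add_left, add_zero]
      rw [h6, hF]
      exact (intervalIntegral.integral_add_adjacent_intervals
        (hfc.intervalIntegrable _ _) (hfc.intervalIntegrable _ _)).symm
    have h4 : HasSum (fun n => c n * y ^ n) (F (x₀ + y)) := by
      rw [hFsplit, add_comm]
      simpa [hc0] using (hasSum_nat_add_iff (f := fun n => c n * y ^ n) 1).1 hint2
    have h7 : (fun n => q n fun _ => y) = fun n => c n * y ^ n := by
      funext n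
      rw [hq, FormalMultilinearSeries.ofScalars_apply_eq, smul_eq_mul]
    rwa [h7]
  exact hmain.analyticAt

lemma stmt10_f_smooth (p : ℝ) : ContDiff ℝ (⊤ : WithTop ℕ∞) fun s : ℝ => Real.cosh (Real.pi * s) ^ p := by
  apply ContDiff.rpow_const_of_ne
  · exact Real.contDiff_cosh.comp (contDiff_const.mul contDiff_id)
  · exact fun s => (Real.cosh_pos _).ne'

lemma stmt10_exp_Ioi (a b : ℝ) (hb : 0 < b) :
    (∫ s in Ioi a, Real.exp (-b * s)) = Real.exp (-b * a) / b := by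
  have hF : ∀ s : ℝ, HasDerivAt (fun u : ℝ => -(Real.exp (-b * u) / b)) (Real.exp (-b * s)) s := by
    intro s
    have h1 : HasDerivAt (fun u : ℝ => -b * u) (-b) s := by
      simpa using (hasDerivAt_id s).const_mul (-b)
    have h2 := (h1.exp.div_const b).neg
    have h3 : -(Real.exp (-b * s) * -b / b) = Real.exp (-b * s) := by
      field_simp
    exact h3 ▸ h2
  have htend : Tendsto (fun u : ℝ => -(Real.exp (-b * u) / b)) atTop (nhds 0) := by
    have h3 : Tendsto (fun u : ℝ => -b * u) atTop atBot :=
      Tendsto.const_mul_atTop_of_neg (by linarith : -b < 0) tendsto_id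
    have := ((Real.tendsto_exp_atBot.comp h3).div_const b).neg
    simpa using this
  have := MeasureTheory.integral_Ioi_of_hasDerivAt_of_tendsto
    (f := fun u : ℝ => -(Real.exp (-b * u) / b)) (f' := fun s => Real.exp (-b * s))
    (hF a).continuousAt.continuousWithinAt (fun x _ => hF x)
    (exp_neg_integrableOn_Ioi a hb) htend
  rw [this]
  ring

/-- `x(ξ) = π^{-1/n} ∫₀^ξ cosh(πs)^{1/n} ds` is an odd, strictly increasing, smooth bijection
of `ℝ` onto `ℝ`, and `x(ξ) = a₀⁻¹ e^{πξ/n} + a₁ + O(e^{-π(2n-1)ξ/n})` as `ξ → +∞`. -/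
theorem stmt_10 (n : ℕ) (hn : 1 ≤ n) (x : ℝ → ℝ)
    (hx : ∀ ξ : ℝ, x ξ =
      Real.pi ^ (-(1:ℝ) / (n:ℝ)) * ∫ s in (0:ℝ)..ξ, Real.cosh (Real.pi * s) ^ ((1:ℝ) / (n:ℝ)))
    (a₀ a₁ : ℝ)
    (ha₀ : a₀ = Real.pi * (2 * Real.pi) ^ ((1:ℝ) / (n:ℝ)) / (n:ℝ))
    (ha₁ : a₁ = (2 * Real.pi) ^ (-(1:ℝ) / (n:ℝ)) *
        (∫ ξ in Set.Ioi (0:ℝ),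
          ((2 * Real.cosh (Real.pi * ξ)) ^ ((1:ℝ) / (n:ℝ)) - Real.exp (Real.pi * ξ / (n:ℝ))))
      - (2 * Real.pi) ^ (-(1:ℝ) / (n:ℝ)) * (n:ℝ) / Real.pi) :
    (∀ ξ : ℝ, x (-ξ) = -x ξ) ∧ StrictMono x ∧ ContDiff ℝ (⊤ : ℕ∞) x ∧ Function.Bijective x ∧
    ∃ C > (0:ℝ), ∃ R : ℝ, ∀ ξ : ℝ, R ≤ ξ →
      |x ξ - a₀⁻¹ * Real.exp (Real.pi * ξ / (n:ℝ)) - a₁| ≤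
        C * Real.exp (-(Real.pi * (2 * (n:ℝ) - 1) * ξ) / (n:ℝ)) := by
  have hπ := Real.pi_pos
  set N : ℝ := (n : ℝ) with hNdef
  have hN1 : (1:ℝ) ≤ N := by rw [hNdef]; exact_mod_cast hn
  have hN0 : (0:ℝ) < N := lt_of_lt_of_le one_pos hN1
  set p : ℝ := (1:ℝ) / N with hpdef
  have hp0 : 0 < p := by positivity
  have hp1 : p ≤ 1 := by rw [hpdef, div_le_one hN0]; exact hN1
  set f : ℝ → ℝ := fun s => Real.cosh (Real.pi * s) ^ p with hfdef
  have hfc : Continuous f := (stmt10_f_smooth p).continuous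
  have hfpos : ∀ s, 0 < f s := fun s => Real.rpow_pos_of_pos (Real.cosh_pos _) p
  have hf1 : ∀ s, 1 ≤ f s := fun s => Real.one_le_rpow (Real.one_le_cosh _) hp0.le
  have hint : ∀ a b : ℝ, IntervalIntegrable f volume a b := fun a b => hfc.intervalIntegrable a b
  set c : ℝ := Real.pi ^ (-(1:ℝ) / N) with hcdef
  have hc0 : 0 < c := Real.rpow_pos_of_pos hπ _
  have hxe : x = fun ξ => c * ∫ s in (0:ℝ)..ξ, f s := funext hx
  subst hxe
  have hodd : ∀ ξ : ℝ, (c * ∫ s in (0:ℝ)..(-ξ), f s) = -(c * ∫ s in (0:ℝ)..ξ, f s) := by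
    intro ξ
    rw [← mul_neg]
    congr 1
    have he : (∫ s in (0:ℝ)..(-ξ), f s) = ∫ s in (0:ℝ)..(-ξ), f (-s) := by
      apply intervalIntegral.integral_congr
      intro s _
      simp [hfdef, mul_neg, Real.cosh_neg]
    rw [he, intervalIntegral.integral_comp_neg, neg_neg, neg_zero]
    exact intervalIntegral.integral_symm 0 ξ
  have hmono : StrictMono fun ξ => c * ∫ s in (0:ℝ)..ξ, f s := by
    intro a b hab
    simp only
    have key : 0 < ∫ s in a..b, f s :=
      intervalIntegral.intervalIntegral_pos_of_pos (hint a b) hfpos hab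
    have hsub := intervalIntegral.integral_interval_sub_left (hint 0 b) (hint 0 a)
    have : (∫ s in (0:ℝ)..a, f s) < ∫ s in (0:ℝ)..b, f s := by linarith
    exact mul_lt_mul_of_pos_left this hc0
  have hsmooth : ContDiff ℝ (⊤ : ℕ∞) fun ξ => c * ∫ s in (0:ℝ)..ξ, f s := by
    refine ContDiff.of_le (n := (⊤ : WithTop ℕ∞)) ?_ le_top
    rw [contDiff_omega_iff_analyticOnNhd]
    intro ξ _
    exact analyticAt_const.mul
      (stmt10_analyticAt_primitive hfc 0 ((stmt10_f_smooth p).analyticOnNhd ξ (Set.mem_univ ξ)))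
  have hlow : ∀ ξ : ℝ, 0 ≤ ξ → c * ξ ≤ c * ∫ s in (0:ℝ)..ξ, f s := by
    intro ξ hξ
    have h1 : (∫ s in (0:ℝ)..ξ, (1:ℝ)) ≤ ∫ s in (0:ℝ)..ξ, f s := by
      apply intervalIntegral.integral_mono_on hξ intervalIntegrable_const (hint 0 ξ)
      intro s _; exact hf1 s
    simp only [intervalIntegral.integral_const, smul_eq_mul, mul_one, sub_zero] at h1
    exact mul_le_mul_of_nonneg_left h1 hc0.le
  have htop : Tendsto (fun ξ : ℝ => c * ∫ s in (0:ℝ)..ξ, f s) atTop atTop := by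
    apply tendsto_atTop_mono' _ _ (tendsto_id.const_mul_atTop hc0)
    filter_upwards [eventually_ge_atTop (0:ℝ)] with ξ hξ using hlow ξ hξ
  have hbot : Tendsto (fun ξ : ℝ => c * ∫ s in (0:ℝ)..ξ, f s) atBot atBot := by
    apply tendsto_atBot_mono' _ _ (tendsto_id.const_mul_atBot hc0)
    filter_upwards [eventually_le_atBot (0:ℝ)] with ξ hξ
    have h1 := hlow (-ξ) (by linarith)
    have h2 := hodd ξ
    simp only [id_eq]
    nlinarith
  refine ⟨hodd, hmono, hsmooth,
    ⟨hmono.injective, hsmooth.continuous.surjective htop hbot⟩, ?_⟩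
  -- asymptotics
  set h : ℝ → ℝ :=
    fun s => (2 * Real.cosh (Real.pi * s)) ^ p - Real.exp (Real.pi * s / N) with hhdef
  set b : ℝ := Real.pi * (2 * N - 1) / N with hbdef
  have h2N : (0:ℝ) < 2 * N - 1 := by linarith
  have hbpos : 0 < b := div_pos (mul_pos hπ h2N) hN0
  have h2c : ∀ s : ℝ, 2 * Real.cosh (Real.pi * s)
      = Real.exp (Real.pi * s) * (1 + Real.exp (-(2 * Real.pi * s))) := by
    intro s
    rw [Real.cosh_eq, mul_add, mul_one, ← Real.exp_add]
    have : Real.pi * s + -(2 * Real.pi * s) = -(Real.pi * s) := by ring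
    rw [this]
    ring
  have hgeq : ∀ s : ℝ, (2 * Real.cosh (Real.pi * s)) ^ p
      = Real.exp (Real.pi * s / N) * (1 + Real.exp (-(2 * Real.pi * s))) ^ p := by
    intro s
    rw [h2c s, Real.mul_rpow (Real.exp_pos _).le (by positivity), ← Real.exp_mul]
    rw [hpdef, mul_one_div]
  have hh0 : ∀ s, 0 ≤ h s := by
    intro s
    rw [hhdef]
    simp only
    rw [hgeq s]
    have h1 : (1:ℝ) ≤ (1 + Real.exp (-(2 * Real.pi * s))) ^ p :=
      Real.one_le_rpow (by nlinarith [Real.exp_pos (-(2 * Real.pi * s))]) hp0.le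
    nlinarith [Real.exp_pos (
      Real.pi * s / N)]
  have hhle : ∀ s, h s ≤ Real.exp (-b * s) := by
    intro s
    rw [hhdef]
    simp only
    rw [hgeq s]
    set t := Real.exp (-(2 * Real.pi * s)) with htdef
    have ht0 : 0 < t := Real.exp_pos _
    have h1 : (1 + t) ^ p ≤ 1 + t := by
      calc (1 + t) ^ p ≤ (1 + t) ^ (1:ℝ) :=
            Real.rpow_le_rpow_of_exponent_le (by linarith) hp1
        _ = 1 + t := Real.rpow_one _
    have h2 : Real.exp (Real.pi * s / N) * (1 + t) ^ p - Real.exp (Real.pi * s / N)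
        ≤ Real.exp (Real.pi * s / N) * t := by
      nlinarith [Real.exp_pos (Real.pi * s / N)]
    have h3 : Real.exp (Real.pi * s / N) * t = Real.exp (-b * s) := by
      rw [htdef, ← Real.exp_add]
      congr 1
      rw [hbdef]
      field_simp
      ring
    linarith [h2, h3.le, h3.ge]
  have hhc : Continuous h := by
    rw [hhdef]
    apply Continuous.sub
    · apply Continuous.rpow_const
      · exact continuous_const.mul (Real.continuous_cosh.comp (continuous_const.mul continuous_id))
      · intro s
        left
        positivity
    · exact Real.continuous_exp.comp ((continuous_const.mul continuous_id).div_const N)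
  have hIntIoi : ∀ a : ℝ, IntegrableOn h (Ioi a) := by
    intro a
    apply Integrable.mono' (exp_neg_integrableOn_Ioi a hbpos)
      (hhc.aestronglyMeasurable.restrict)
    filter_upwards with s
    rw [Real.norm_eq_abs, abs_of_nonneg (hh0 s)]
    exact hhle s
  have hTail : ∀ ξ : ℝ, |∫ s in Ioi ξ, h s| ≤ Real.exp (-b * ξ) / b := by
    intro ξ
    rw [← Real.norm_eq_abs]
    calc ‖∫ s in Ioi ξ, h s‖
        ≤ ∫ s in Ioi ξ, Real.exp (-b * s) := by
          apply MeasureTheory.norm_integral_le_of_norm_le (exp_neg_integrableOn_Ioi ξ hbpos)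
          filter_upwards with s
          rw [Real.norm_eq_abs, abs_of_nonneg (hh0 s)]
          exact hhle s
      _ = Real.exp (-b * ξ) / b := stmt10_exp_Ioi ξ b hbpos
  have hsplit : ∀ ξ : ℝ, 0 ≤ ξ →
      (∫ s in Ioi (0:ℝ), h s) = (∫ s in (0:ℝ)..ξ, h s) + ∫ s in Ioi ξ, h s := by
    intro ξ hξ
    rw [intervalIntegral.integral_of_le hξ, ← MeasureTheory.setIntegral_union
      (Set.Ioc_disjoint_Ioi le_rfl) measurableSet_Ioi
      ((hIntIoi 0).mono_set Set.Ioc_subset_Ioi_self) (hIntIoi ξ),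
      Set.Ioc_union_Ioi_eq_Ioi hξ]
  have hEint : ∀ ξ : ℝ, (∫ s in (0:ℝ)..ξ, Real.exp (Real.pi * s / N))
      = (N / Real.pi) * (Real.exp (Real.pi * ξ / N) - 1) := by
    intro ξ
    have hd : ∀ s : ℝ, HasDerivAt (fun u : ℝ => (N / Real.pi) * Real.exp (Real.pi * u / N))
        (Real.exp (Real.pi * s / N)) s := by
      intro s
      have h1 : HasDerivAt (fun u : ℝ => Real.pi * u / N) (Real.pi / N) s := by
        simpa using ((hasDerivAt_id s).const_mul Real.pi).div_const N
      have h2 := h1.exp.const_mul (N / Real.pi)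
      have h3 : (N / Real.pi) * (Real.exp (Real.pi * s / N) * (Real.pi / N))
          = Real.exp (Real.pi * s / N) := by
        field_simp
      exact h3 ▸ h2
    rw [intervalIntegral.integral_eq_sub_of_hasDerivAt (fun s _ => hd s)
      ((Real.continuous_exp.comp ((continuous_const.mul continuous_id).div_const N)
        ).intervalIntegrable 0 ξ)]
    simp only [mul_zero, zero_div, Real.exp_zero]
    ring
  -- the main estimate
  set q : ℝ := (2 * Real.pi) ^ (-(1:ℝ) / N) with hqdef
  have hq0 : 0 < q := Real.rpow_pos_of_pos (by linarith) _
  have hcq : c * (2:ℝ) ^ (-(1:ℝ) / N) = q := by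
    rw [hqdef, hcdef, Real.mul_rpow (by norm_num) hπ.le]
    ring
  have hfg : ∀ s : ℝ, f s = (2:ℝ) ^ (-(1:ℝ) / N) * (2 * Real.cosh (Real.pi * s)) ^ p := by
    intro s
    rw [hfdef]
    simp only
    rw [Real.mul_rpow (by norm_num) (Real.cosh_pos _).le]
    rw [show -(1:ℝ) / N = -p by rw [hpdef]; ring, Real.rpow_neg (by norm_num)]
    rw [← mul_assoc, inv_mul_cancel₀ (Real.rpow_pos_of_pos two_pos p).ne']
    rw [one_mul]
  have ha₀inv : a₀⁻¹ = q * N / Real.pi := by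
    rw [ha₀, hqdef]
    rw [show -(1:ℝ) / N = -((1:ℝ)/N) by ring, Real.rpow_neg (by linarith)]
    rw [hpdef]
    field_simp
  refine ⟨q / b, div_pos hq0 hbpos, 0, fun ξ hξ => ?_⟩
  have hgint : ∀ a b' : ℝ, IntervalIntegrable
      (fun s => (2 * Real.cosh (Real.pi * s)) ^ p) volume a b' := by
    intro a b'
    apply Continuous.intervalIntegrable
    apply Continuous.rpow_const
    · exact continuous_const.mul (Real.continuous_cosh.comp (continuous_const.mul continuous_id))
    · intro s; left; positivity
  have hEcont : Continuous fun s : ℝ => Real.exp (Real.pi * s / N) :=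
    Real.continuous_exp.comp ((continuous_const.mul continuous_id).div_const N)
  have key : (c * ∫ s in (0:ℝ)..ξ, f s)
      = q * ((∫ s in (0:ℝ)..ξ, h s) + (N / Real.pi) * (Real.exp (Real.pi * ξ / N) - 1)) := by
    have h1 : (∫ s in (0:ℝ)..ξ, f s)
        = (2:ℝ) ^ (-(1:ℝ) / N) * ∫ s in (0:ℝ)..ξ, (2 * Real.cosh (Real.pi * s)) ^ p := by
      rw [← intervalIntegral.integral_const_mul]
      apply intervalIntegral.integral_congr
      intro s _
      exact hfg s
    have h2 : (∫ s in (0:ℝ)..ξ, (2 * Real.cosh (Real.pi * s)) ^ p)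
        = (∫ s in (0:ℝ)..ξ, h s) + ∫ s in (0:ℝ)..ξ, Real.exp (Real.pi * s / N) := by
      rw [← intervalIntegral.integral_add]
      · apply intervalIntegral.integral_congr
        intro s _
        rw [hhdef]
        simp
      · exact (hhc.intervalIntegrable _ _)
      · exact hEcont.intervalIntegrable _ _
    rw [h1, h2, hEint, ← mul_assoc, hcq]
  rw [hx ξ, key, ha₁, ha₀inv]
  have hid : q * ((∫ s in (0:ℝ)..ξ, h s) + (N / Real.pi) * (Real.exp (Real.pi * ξ / N) - 1))
      - q * N / Real.pi * Real.exp (Real.pi * ξ / N)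
      - (q * (∫ s in Ioi (0:ℝ), h s) - q * N / Real.pi)
      = -(q * ∫ s in Ioi ξ, h s) := by
    rw [hsplit ξ hξ]
    ring
  rw [hid, abs_neg, abs_mul, abs_of_pos hq0]
  have hexp : Real.exp (-(Real.pi * (2 * N - 1) * ξ) / N) = Real.exp (-b * ξ) := by
    congr 1
    rw [hbdef]
    ring
  rw [hexp]
  calc q * |∫ s in Ioi ξ, h s| ≤ q * (Real.exp (-b * ξ) / b) :=
        mul_le_mul_of_nonneg_left (hTail ξ) hq0.le
    _ = q / b * Real.exp (-b * ξ) := by ring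
end

section
/- Let ξ : ℝ → ℝ be C², strictly increasing with ξ'(x) > 0 for all x, and suppose ξ'(x) ≍ |x|^{-1} and |ξ''(x)| ≤ C x^{-2} for |x| ≥ 1. Let κ ∈ ℂ \ [0,∞) and R ∈ C¹(ℝ) with |e^{iκx} R^{(l)}(x)| ≤ C(1+|x|)^{-a-l} for l = 0, 1 and some a ∈ (0,1). Then the integral J(N) = ∫_{-∞}^{∞} e^{-iξ(x)N + iκx} R(x) dx satisfies J(N) = O(|N|^{-a}) as N → +∞. -/
/-!
Integrate by parts against the oscillation. With `F = exp (-i ξ N + i κ x)` and `D = κ - ξ' N` we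
have `F' = i D F`, hence `F R = (F R / (i D))' - G` with `G` built from `R' / D` and `ξ'' N R / D²`,
and the boundary terms vanish because `F R` decays. Since `κ` stays away from `[0, ∞)`,
`|D| ≳ 1 + ξ' N ≳ (|x| + c₁ N) / (1 + |x|)`, and the decay of `R`, `R'`, `ξ''` then gives
`|G x| ≲ |x| ^ (-a) / (|x| + c₁ N)`. This weight is homogeneous of degree `-a - 1`, so rescaling
`x = c₁ N y` shows that its integral is `(c₁ N) ^ (-a)` times a constant.
-/

open MeasureTheory Filter Topology Set Complex

theorem exists_mul_one_add_le_norm_sub_ofReal {κ : ℂ} (hκ : κ ∉ {w : ℂ | w.im = 0 ∧ 0 ≤ w.re}) :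
    ∃ c₀ > 0, ∀ t : ℝ, 0 ≤ t → c₀ * (1 + t) ≤ ‖κ - t‖ := by
  set δ := max |κ.im| (-κ.re)
  have hδ : 0 < δ := by
    by_contra! h
    exact hκ ⟨abs_nonpos_iff.mp ((le_max_left _ _).trans h),
      by linarith [le_max_right |κ.im| (-κ.re)]⟩
  -- `‖κ - t‖` dominates both `δ` and `t - ‖κ‖`; take the convex combination that balances them
  refine ⟨δ / (δ + 1 + ‖κ‖), by positivity, fun t ht => ?_⟩
  have hδt : δ ≤ ‖κ - t‖ := by
    refine max_le ?_ ?_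
    · simpa using Complex.abs_im_le_norm (κ - t)
    · have := Complex.abs_re_le_norm (κ - t)
      simp only [Complex.sub_re, Complex.ofReal_re] at this
      linarith [neg_abs_le (κ.re - t)]
  have htκ : t - ‖κ‖ ≤ ‖κ - t‖ := by
    have := norm_sub_norm_le (t : ℂ) κ
    rw [Complex.norm_real, Real.norm_of_nonneg ht, norm_sub_rev] at this
    exact this
  rw [div_mul_eq_mul_div, div_le_iff₀ (by positivity)]
  nlinarith [norm_nonneg κ]

theorem exists_div_one_add_abs_le {f : ℝ → ℝ} (hf : Continuous f) (hpos : ∀ x, 0 < f x)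
    {c : ℝ} (hc : 0 < c) (hlow : ∀ x, 1 ≤ |x| → c * |x|⁻¹ ≤ f x) :
    ∃ c₁ > 0, ∀ x, c₁ / (1 + |x|) ≤ f x := by
  obtain ⟨x₀, -, hx₀⟩ := isCompact_Icc.exists_isMinOn (nonempty_Icc.2 (by norm_num : (-1:ℝ) ≤ 1))
    hf.continuousOn
  refine ⟨min c (f x₀), lt_min hc (hpos x₀), fun x => ?_⟩
  rcases le_or_gt 1 |x| with hx | hx
  · calc min c (f x₀) / (1 + |x|) ≤ c / |x| :=
          div_le_div₀ hc.le (min_le_left _ _) (by linarith) (by linarith)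
      _ ≤ f x := hlow x hx
  · calc min c (f x₀) / (1 + |x|) ≤ min c (f x₀) :=
          div_le_self (lt_min hc (hpos x₀)).le (by linarith [abs_nonneg x])
      _ ≤ f x := (min_le_right _ _).trans (hx₀ (abs_le.mp hx.le))

theorem exists_abs_le_div_one_add_abs_sq {f : ℝ → ℝ} (hf : Continuous f) {C : ℝ}
    (hup : ∀ x, 1 ≤ |x| → |f x| ≤ C * (x ^ 2)⁻¹) :
    ∃ C₂, ∀ x, |f x| ≤ C₂ / (1 + |x|) ^ 2 := by
  obtain ⟨B, hB⟩ := isCompact_Icc.exists_bound_of_continuousOn (hf.continuousOn (s := Icc (-1) 1))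
  have hB0 : 0 ≤ B := (norm_nonneg _).trans (hB 0 (by norm_num))
  refine ⟨4 * max C B, fun x => ?_⟩
  have hu : 0 < (1 + |x|) ^ 2 := by positivity
  rcases le_or_gt 1 |x| with hx | hx
  · have hx2 : (1 + |x|) ^ 2 ≤ 4 * x ^ 2 := by nlinarith [sq_abs x]
    calc |f x| ≤ C * (x ^ 2)⁻¹ := hup x hx
      _ ≤ max C B / x ^ 2 := by
          rw [← div_eq_mul_inv]; gcongr; exact le_max_left _ _
      _ ≤ 4 * max C B / (1 + |x|) ^ 2 := by
          rw [div_le_div_iff₀ (by nlinarith) hu]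
          nlinarith [le_max_right C B]
  · have hx2 : (1 + |x|) ^ 2 ≤ 4 := by nlinarith [abs_nonneg x]
    calc |f x| ≤ max C B := (hB x (abs_le.mp hx.le)).trans (le_max_right _ _)
      _ ≤ 4 * max C B / (1 + |x|) ^ 2 := by
          rw [le_div_iff₀ hu]; nlinarith [le_max_right C B]

theorem norm_integral_le_of_hasDerivAt_add {E : Type*} [NormedAddCommGroup E] [NormedSpace ℝ E]
    [CompleteSpace E] {P f g : ℝ → E} {b : ℝ → ℝ} (hP : ∀ x, HasDerivAt P (f x + g x) x)
    (hbot : Tendsto P atBot (𝓝 0)) (htop : Tendsto P atTop (𝓝 0))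
    (hg : AEStronglyMeasurable g) (hb : Integrable b) (hgb : ∀ᵐ x, ‖g x‖ ≤ b x) :
    ‖∫ x, f x‖ ≤ ∫ x, b x := by
  have hgi : Integrable g := hb.mono' hg hgb
  by_cases hf : Integrable f
  · have hsum := integral_of_hasDerivAt_of_tendsto hP (hf.add hgi) hbot htop
    rw [integral_add hf hgi, sub_zero, add_eq_zero_iff_eq_neg] at hsum
    rw [hsum, norm_neg]
    exact norm_integral_le_of_norm_le hb hgb
  · -- a non-integrable `f` has Bochner integral `0`
    rw [integral_undef hf, norm_zero]
    exact integral_nonneg_of_ae (hgb.mono fun x hx => (norm_nonneg _).trans hx)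

theorem integrable_abs_rpow_neg_div_one_add_abs {a : ℝ} (ha : a ∈ Ioo (0 : ℝ) 1) :
    Integrable fun y : ℝ => |y| ^ (-a) / (1 + |y|) := by
  have hmeas : AEStronglyMeasurable fun y : ℝ => |y| ^ (-a) / (1 + |y|) :=
    (measurable_abs.pow_const _ |>.div (measurable_const.add measurable_abs)).aestronglyMeasurable
  have hle : ∀ y : ℝ, |y| ^ (-a) / (1 + |y|) ≤ |y| ^ (-a) := fun y =>
    div_le_self (by positivity) (by linarith [abs_nonneg y])
  have hloc : LocallyIntegrable fun y : ℝ => |y| ^ (-a) / (1 + |y|) := by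
    refine locallyIntegrable_of_norm_le_rpow (C := 1) (α := a) (by simp) (by simpa using ha.2)
      (ae_of_all _ fun y => ?_) hmeas
    rw [Real.norm_of_nonneg (by positivity), one_mul, Real.norm_eq_abs]
    exact hle y
  refine hloc.integrable_of_isBigO_atTop_of_norm_isNegInvariant (g := fun y => y ^ (-a - 1))
    (ae_of_all _ fun y => by simp) ?_ ⟨Ioi 1, Ioi_mem_atTop 1,
      integrableOn_Ioi_rpow_of_lt (by linarith [ha.1]) one_pos⟩
  refine Asymptotics.IsBigO.of_bound 1 ?_
  filter_upwards [eventually_gt_atTop 0] with y hy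
  rw [abs_of_pos hy, one_mul, Real.norm_of_nonneg (by positivity),
    Real.norm_of_nonneg (by positivity), Real.rpow_sub_one hy.ne']
  exact div_le_div_of_nonneg_left (by positivity) hy (by linarith)

theorem abs_rpow_neg_div_abs_add_eq {a M : ℝ} (hM : 0 < M) (x : ℝ) :
    |x| ^ (-a) / (|x| + M) = M ^ (-a - 1) * (|x / M| ^ (-a) / (1 + |x / M|)) := by
  rw [abs_div, abs_of_pos hM, Real.div_rpow (abs_nonneg x) hM.le, Real.rpow_sub_one hM.ne',
    Real.rpow_neg hM.le]
  field_simp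
  ring

theorem one_add_abs_rpow_neg_div_le {a M : ℝ} (ha : 0 ≤ a) (hM : 0 ≤ M) {x : ℝ} (hx : x ≠ 0) :
    (1 + |x|) ^ (-a) / (1 + |x| + M) ≤ |x| ^ (-a) / (|x| + M) := by
  have hx' : 0 < |x| := abs_pos.2 hx
  gcongr ?_ / ?_
  · exact Real.rpow_le_rpow_of_nonpos hx' (by linarith) (by linarith)
  · linarith

noncomputable section

variable {ξ : ℝ → ℝ} {κ : ℂ} {N x : ℝ} {R : ℝ → ℂ}

def phaseFactor (ξ : ℝ → ℝ) (κ : ℂ) (N x : ℝ) : ℂ :=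
  exp (-I * (ξ x : ℂ) * (N : ℂ) + I * κ * (x : ℂ))

def phaseSlope (ξ : ℝ → ℝ) (κ : ℂ) (N x : ℝ) : ℂ :=
  κ - ((deriv ξ x * N : ℝ) : ℂ)

def ibpRemainder (ξ : ℝ → ℝ) (κ : ℂ) (N : ℝ) (R : ℝ → ℂ) (x : ℝ) : ℂ :=
  phaseFactor ξ κ N x * deriv R x / (I * phaseSlope ξ κ N x)
    - I * ((deriv (deriv ξ) x * N : ℝ) : ℂ) * (phaseFactor ξ κ N x * R x) / phaseSlope ξ κ N x ^ 2

theorem norm_phaseFactor_mul (z : ℂ) :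
    ‖phaseFactor ξ κ N x * z‖ = ‖exp (I * κ * (x : ℂ)) * z‖ := by
  rw [phaseFactor, exp_add, mul_assoc, norm_mul, norm_exp]
  simp [mul_re, mul_im]

theorem hasDerivAt_phaseFactor (hξ : DifferentiableAt ℝ ξ x) :
    HasDerivAt (phaseFactor ξ κ N) (I * phaseSlope ξ κ N x * phaseFactor ξ κ N x) x := by
  have hlin : HasDerivAt (fun y : ℝ => -I * (ξ y : ℂ) * (N : ℂ) + I * κ * (y : ℂ))
      (-I * ((deriv ξ x : ℝ) : ℂ) * N + I * κ) x := by
    simpa using ((hξ.hasDerivAt.ofReal_comp.const_mul (-I)).mul_const (N : ℂ)).fun_add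
      ((hasDerivAt_id x).ofReal_comp.const_mul (I * κ))
  refine hlin.cexp.congr_deriv ?_
  simp only [phaseSlope, phaseFactor]
  push_cast
  ring

theorem hasDerivAt_phaseSlope (hξ : DifferentiableAt ℝ (deriv ξ) x) :
    HasDerivAt (phaseSlope ξ κ N) (-((deriv (deriv ξ) x * N : ℝ) : ℂ)) x :=
  ((hξ.hasDerivAt.mul_const N).ofReal_comp.const_sub κ)

theorem hasDerivAt_phaseFactor_mul_div (hξ : DifferentiableAt ℝ ξ x)
    (hξ' : DifferentiableAt ℝ (deriv ξ) x) (hR : DifferentiableAt ℝ R x)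
    (hD : phaseSlope ξ κ N x ≠ 0) :
    HasDerivAt (fun y => phaseFactor ξ κ N y * R y / (I * phaseSlope ξ κ N y))
      (phaseFactor ξ κ N x * R x + ibpRemainder ξ κ N R x) x := by
  refine (((hasDerivAt_phaseFactor hξ).fun_mul hR.hasDerivAt).fun_div
    ((hasDerivAt_phaseSlope hξ').const_mul I) (mul_ne_zero I_ne_zero hD)).congr_deriv ?_
  simp only [ibpRemainder]
  field_simp
  linear_combination (phaseFactor ξ κ N x * R x * ((deriv (deriv ξ) x * N : ℝ) : ℂ)) * I_sq

theorem norm_ibpRemainder_le (hN : 0 ≤ N) :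
    ‖ibpRemainder ξ κ N R x‖ ≤ ‖phaseFactor ξ κ N x * deriv R x‖ / ‖phaseSlope ξ κ N x‖
      + |deriv (deriv ξ) x| * N * ‖phaseFactor ξ κ N x * R x‖ / ‖phaseSlope ξ κ N x‖ ^ 2 := by
  refine (norm_sub_le _ _).trans_eq ?_
  simp [abs_of_nonneg hN, mul_assoc]

theorem one_div_norm_phaseSlope_le {c₀ c₁ : ℝ} (hN : 0 ≤ N) (hc₀ : 0 < c₀) (hc₁ : 0 < c₁)
    (hκ : ∀ t : ℝ, 0 ≤ t → c₀ * (1 + t) ≤ ‖κ - t‖) (hξ' : c₁ / (1 + |x|) ≤ deriv ξ x) :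
    1 / ‖phaseSlope ξ κ N x‖ ≤ (1 + |x|) / (c₀ * (1 + |x| + c₁ * N)) := by
  set u := 1 + |x|
  have hu : 0 < u := by positivity
  set d := ‖phaseSlope ξ κ N x‖
  have hd : c₀ * ((u + c₁ * N) / u) ≤ d := by
    have hξN : c₁ * N / u ≤ deriv ξ x * N := by
      rw [mul_div_right_comm]; exact mul_le_mul_of_nonneg_right hξ' hN
    calc c₀ * ((u + c₁ * N) / u) = c₀ * (1 + c₁ * N / u) := by field_simp
      _ ≤ c₀ * (1 + deriv ξ x * N) := by gcongr
      _ ≤ d := hκ _ (hξN.trans' (by positivity))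
  have hd0 : 0 < d := lt_of_lt_of_le (by positivity) hd
  rw [div_le_div_iff₀ hd0 (by positivity)]
  calc 1 * (c₀ * (u + c₁ * N)) = c₀ * ((u + c₁ * N) / u) * u := by field_simp
    _ ≤ u * d := by rw [mul_comm u]; gcongr

theorem norm_ibpRemainder_le_weight {a c₀ c₁ C₂ CR : ℝ} (ha : 0 ≤ a) (hx : x ≠ 0) (hN : 0 ≤ N)
    (hc₀ : 0 < c₀) (hc₁ : 0 < c₁) (hκ : ∀ t : ℝ, 0 ≤ t → c₀ * (1 + t) ≤ ‖κ - t‖)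
    (hξ' : c₁ / (1 + |x|) ≤ deriv ξ x) (hξ'' : |deriv (deriv ξ) x| ≤ C₂ / (1 + |x|) ^ 2)
    (hR0 : ‖exp (I * κ * (x : ℂ)) * R x‖ ≤ CR * (1 + |x|) ^ (-a))
    (hR1 : ‖exp (I * κ * (x : ℂ)) * deriv R x‖ ≤ CR * (1 + |x|) ^ (-a - 1)) :
    ‖ibpRemainder ξ κ N R x‖
      ≤ (CR / c₀ + CR * C₂ / (c₀ ^ 2 * c₁)) * (|x| ^ (-a) / (|x| + c₁ * N)) := by
  set u := 1 + |x|
  have hu : 0 < u := by positivity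
  have hua : 0 < u ^ (-a) := Real.rpow_pos_of_pos hu _
  have hCR : 0 ≤ CR := nonneg_of_mul_nonneg_left ((norm_nonneg _).trans hR0) hua
  have hC₂ : 0 ≤ C₂ :=
    nonneg_of_mul_nonneg_left ((abs_nonneg _).trans (div_eq_mul_inv C₂ _ ▸ hξ'')) (by positivity)
  set d := ‖phaseSlope ξ κ N x‖
  have hinv : 1 / d ≤ u / (c₀ * (u + c₁ * N)) := one_div_norm_phaseSlope_le hN hc₀ hc₁ hκ hξ'
  have hNd : N / d ≤ u / (c₀ * c₁) := by
    calc N / d = N * (1 / d) := by ring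
      _ ≤ N * (u / (c₀ * (u + c₁ * N))) := by gcongr
      _ ≤ u / (c₀ * c₁) := by
          rw [mul_div_assoc', div_le_div_iff₀ (by positivity) (by positivity)]
          nlinarith [mul_pos hu hc₀, mul_nonneg (mul_nonneg hu.le hc₀.le) hN]
  calc ‖ibpRemainder ξ κ N R x‖
      ≤ ‖phaseFactor ξ κ N x * deriv R x‖ / d
        + |deriv (deriv ξ) x| * N * ‖phaseFactor ξ κ N x * R x‖ / d ^ 2 :=
        norm_ibpRemainder_le hN
    _ = ‖phaseFactor ξ κ N x * deriv R x‖ * (1 / d)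
        + |deriv (deriv ξ) x| * ‖phaseFactor ξ κ N x * R x‖ * (N / d) * (1 / d) := by ring
    _ ≤ CR * u ^ (-a - 1) * (u / (c₀ * (u + c₁ * N)))
        + C₂ / u ^ 2 * (CR * u ^ (-a)) * (u / (c₀ * c₁)) * (u / (c₀ * (u + c₁ * N))) := by
        rw [norm_phaseFactor_mul, norm_phaseFactor_mul]
        gcongr
    _ = (CR / c₀ + CR * C₂ / (c₀ ^ 2 * c₁)) * (u ^ (-a) / (u + c₁ * N)) := by
        rw [Real.rpow_sub_one hu.ne']
        field_simp
    _ ≤ (CR / c₀ + CR * C₂ / (c₀ ^ 2 * c₁)) * (|x| ^ (-a) / (|x| + c₁ * N)) :=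
        mul_le_mul_of_nonneg_left (one_add_abs_rpow_neg_div_le ha (by positivity) hx)
          (by positivity)

theorem continuous_ibpRemainder (hξ : ContDiff ℝ 2 ξ) (hR : ContDiff ℝ 1 R)
    (hD : ∀ x, phaseSlope ξ κ N x ≠ 0) : Continuous (ibpRemainder ξ κ N R) := by
  have := hξ.continuous
  have := hξ.continuous_deriv (by norm_num)
  have := (hξ.deriv' (n := 1)).continuous_deriv_one
  have := hR.continuous
  have := hR.continuous_deriv_one
  have hF : Continuous (phaseFactor ξ κ N) := by unfold phaseFactor; fun_prop
  have hS : Continuous (phaseSlope ξ κ N) := by unfold phaseSlope; fun_prop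
  unfold ibpRemainder
  exact (by fun_prop : Continuous fun x => phaseFactor ξ κ N x * deriv R x).div (by fun_prop)
      (fun x => mul_ne_zero I_ne_zero (hD x)) |>.sub <|
    (by fun_prop : Continuous fun x => I * ((deriv (deriv ξ) x * N : ℝ) : ℂ)
      * (phaseFactor ξ κ N x * R x)).div (by fun_prop) fun x => pow_ne_zero 2 (hD x)

theorem tendsto_phaseFactor_mul_div {a c₀ CR : ℝ} (ha : 0 < a) (hc₀ : 0 < c₀)
    (hslope : ∀ x, c₀ ≤ ‖phaseSlope ξ κ N x‖)
    (hR0 : ∀ x : ℝ, ‖exp (I * κ * (x : ℂ)) * R x‖ ≤ CR * (1 + |x|) ^ (-a)) :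
    Tendsto (fun x => phaseFactor ξ κ N x * R x / (I * phaseSlope ξ κ N x)) (atBot ⊔ atTop)
      (𝓝 0) := by
  refine squeeze_zero_norm (a := fun x => CR / c₀ * (1 + |x|) ^ (-a)) (fun x => ?_) ?_
  · rw [norm_div, norm_mul I, norm_I, one_mul, norm_phaseFactor_mul, div_mul_eq_mul_div]
    exact div_le_div₀ ((norm_nonneg _).trans (hR0 x)) (hR0 x) hc₀ (hslope x)
  · simpa using ((tendsto_rpow_neg_atTop ha).comp (tendsto_atTop_add_const_left _ 1
      (tendsto_abs_atBot_atTop.sup tendsto_abs_atTop_atTop))).const_mul (CR / c₀)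

theorem norm_integral_phaseFactor_mul_le {a c₀ c₁ C₂ CR : ℝ} (hξ : ContDiff ℝ 2 ξ)
    (hR : ContDiff ℝ 1 R) (ha : a ∈ Ioo (0 : ℝ) 1) (hN : 0 < N) (hc₀ : 0 < c₀) (hc₁ : 0 < c₁)
    (hκ : ∀ t : ℝ, 0 ≤ t → c₀ * (1 + t) ≤ ‖κ - t‖)
    (hξ' : ∀ x, c₁ / (1 + |x|) ≤ deriv ξ x) (hξ'' : ∀ x, |deriv (deriv ξ) x| ≤ C₂ / (1 + |x|) ^ 2)
    (hR0 : ∀ x : ℝ, ‖exp (I * κ * (x : ℂ)) * R x‖ ≤ CR * (1 + |x|) ^ (-a))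
    (hR1 : ∀ x : ℝ, ‖exp (I * κ * (x : ℂ)) * deriv R x‖ ≤ CR * (1 + |x|) ^ (-a - 1)) :
    ‖∫ x, phaseFactor ξ κ N x * R x‖ ≤ (CR / c₀ + CR * C₂ / (c₀ ^ 2 * c₁)) * (c₁ * N) ^ (-a)
      * ∫ y : ℝ, |y| ^ (-a) / (1 + |y|) := by
  set K := CR / c₀ + CR * C₂ / (c₀ ^ 2 * c₁)
  set M := c₁ * N
  have hM : 0 < M := mul_pos hc₁ hN
  have hslope : ∀ x, c₀ ≤ ‖phaseSlope ξ κ N x‖ := fun x => by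
    have ht : 0 ≤ deriv ξ x * N := mul_nonneg ((hξ' x).trans' (by positivity)) hN.le
    exact (hκ _ ht).trans' (by nlinarith)
  have hD : ∀ x, phaseSlope ξ κ N x ≠ 0 := fun x => norm_pos_iff.mp (hc₀.trans_le (hslope x))
  have hPlim := tendsto_phaseFactor_mul_div ha.1 hc₀ hslope hR0
  have hb : Integrable fun x : ℝ => K * (M ^ (-a - 1) * (|x / M| ^ (-a) / (1 + |x / M|))) :=
    ((integrable_abs_rpow_neg_div_one_add_abs ha).comp_div hM.ne').const_mul _ |>.const_mul _
  have hGb : ∀ᵐ x, ‖ibpRemainder ξ κ N R x‖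
      ≤ K * (M ^ (-a - 1) * (|x / M| ^ (-a) / (1 + |x / M|))) := by
    filter_upwards [Measure.ae_ne volume 0] with x hx
    rw [← abs_rpow_neg_div_abs_add_eq hM]
    exact norm_ibpRemainder_le_weight ha.1.le hx hN.le hc₀ hc₁ hκ (hξ' x) (hξ'' x) (hR0 x) (hR1 x)
  refine (norm_integral_le_of_hasDerivAt_add
    (fun x => hasDerivAt_phaseFactor_mul_div (hξ.differentiable (by norm_num) x)
      (hξ.differentiable_deriv_two x) (hR.differentiable one_ne_zero x) (hD x))
    (hPlim.mono_left le_sup_left) (hPlim.mono_left le_sup_right)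
    (continuous_ibpRemainder hξ hR hD).aestronglyMeasurable hb hGb).trans_eq ?_
  rw [integral_const_mul, integral_const_mul,
    Measure.integral_comp_div (fun y => |y| ^ (-a) / (1 + |y|)), abs_of_pos hM, smul_eq_mul,
    Real.rpow_sub_one hM.ne']
  field_simp
end

theorem stmt_12_general (ξ : ℝ → ℝ) (hξ : ContDiff ℝ 2 ξ)
    (hpos : ∀ x : ℝ, 0 < deriv ξ x)
    (c C : ℝ) (hc : 0 < c)
    (hlow : ∀ x : ℝ, 1 ≤ |x| → c * |x|⁻¹ ≤ deriv ξ x)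
    (hsecond : ∀ x : ℝ, 1 ≤ |x| → |deriv (deriv ξ) x| ≤ C * (x ^ 2)⁻¹)
    (κ : ℂ) (hκ : κ ∉ {w : ℂ | w.im = 0 ∧ 0 ≤ w.re})
    (R : ℝ → ℂ) (hR : ContDiff ℝ 1 R) (a : ℝ) (ha : a ∈ Set.Ioo (0:ℝ) 1) (CR : ℝ)
    (hR0 : ∀ x : ℝ, ‖Complex.exp (Complex.I * κ * (x : ℂ)) * R x‖ ≤ CR * (1 + |x|) ^ (-a))
    (hR1 : ∀ x : ℝ,
      ‖Complex.exp (Complex.I * κ * (x : ℂ)) * deriv R x‖ ≤ CR * (1 + |x|) ^ (-a - 1)) :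
    ∃ C' N₀ : ℝ, ∀ N : ℝ, N₀ ≤ N →
      ‖∫ x : ℝ, Complex.exp (-Complex.I * (ξ x : ℂ) * (N : ℂ) + Complex.I * κ * (x : ℂ)) * R x‖
        ≤ C' * N ^ (-a) := by
  obtain ⟨c₀, hc₀, hκ'⟩ := exists_mul_one_add_le_norm_sub_ofReal hκ
  obtain ⟨c₁, hc₁, hξ'⟩ :=
    exists_div_one_add_abs_le (hξ.continuous_deriv (by norm_num)) hpos hc hlow
  obtain ⟨C₂, hξ''⟩ :=
    exists_abs_le_div_one_add_abs_sq (hξ.deriv' (n := 1)).continuous_deriv_one hsecond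
  refine ⟨(CR / c₀ + CR * C₂ / (c₀ ^ 2 * c₁)) * c₁ ^ (-a) * ∫ y : ℝ, |y| ^ (-a) / (1 + |y|), 1,
    fun N hN => ?_⟩
  have hJ := norm_integral_phaseFactor_mul_le (N := N) hξ hR ha (by linarith) hc₀ hc₁ hκ' hξ' hξ''
    hR0 hR1
  rw [Real.mul_rpow hc₁.le (by linarith)] at hJ
  exact hJ.trans_eq (by ring)

/-- Non-stationary phase estimate: with `ξ` increasing, `ξ'(x) ≍ |x|⁻¹` and `|ξ''(x)| ≤ C x⁻²`
for `|x| ≥ 1`, `κ ∈ ℂ \ [0,∞)`, and `|e^{iκx} R^{(l)}(x)| ≤ C(1+|x|)^{-a-l}` for `l = 0,1`,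
the integral `J(N) = ∫ e^{-iξ(x)N + iκx} R(x) dx` is `O(N^{-a})` as `N → +∞`. -/
theorem stmt_12 (ξ : ℝ → ℝ) (hξ : ContDiff ℝ 2 ξ) (hmono : StrictMono ξ)
    (hpos : ∀ x : ℝ, 0 < deriv ξ x)
    (c C : ℝ) (hc : 0 < c) (hC : 0 < C)
    (hlow : ∀ x : ℝ, 1 ≤ |x| → c * |x|⁻¹ ≤ deriv ξ x)
    (hup : ∀ x : ℝ, 1 ≤ |x| → deriv ξ x ≤ C * |x|⁻¹)
    (hsecond : ∀ x : ℝ, 1 ≤ |x| → |deriv (deriv ξ) x| ≤ C * (x ^ 2)⁻¹)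
    (κ : ℂ) (hκ : κ ∉ {w : ℂ | w.im = 0 ∧ 0 ≤ w.re})
    (R : ℝ → ℂ) (hR : ContDiff ℝ 1 R) (a : ℝ) (ha : a ∈ Set.Ioo (0:ℝ) 1) (CR : ℝ)
    (hR0 : ∀ x : ℝ, ‖Complex.exp (Complex.I * κ * (x : ℂ)) * R x‖ ≤ CR * (1 + |x|) ^ (-a))
    (hR1 : ∀ x : ℝ,
      ‖Complex.exp (Complex.I * κ * (x : ℂ)) * deriv R x‖ ≤ CR * (1 + |x|) ^ (-a - 1)) :
    ∃ C' N₀ : ℝ, ∀ N : ℝ, N₀ ≤ N →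
      ‖∫ x : ℝ, Complex.exp (-Complex.I * (ξ x : ℂ) * (N : ℂ) + Complex.I * κ * (x : ℂ)) * R x‖
        ≤ C' * N ^ (-a) :=
  stmt_12_general ξ hξ hpos c C hc hlow hsecond κ hκ R hR a ha CR hR0 hR1
end

section
/- There is an absolute constant C such that for every N ∈ ℝ \ {0} and every x ≥ 0, |∫_x^∞ e^{iNy} y^{-1/2} dy| ≤ C |N|^{-1/2} (1 + |N| x)^{-1/2}, where the integral is understood as an improper (oscillatory) integral. -/
/-!
For `|N| x ≥ 1`, one integration by parts on `[x, ∞)` bounds both the boundary term and the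
remainder by `x^{-1/2} / |N|`. For `|N| x ≤ 1`, split at `1/|N|`: the trivial bound on
`[x, 1/|N|]` and the integration-by-parts bound on `[1/|N|, ∞)` are each `2 |N|^{-1/2}`.
In both regimes this is `≲ |N|^{-1/2} (1 + |N| x)^{-1/2}`.
-/

open MeasureTheory Filter Set intervalIntegral Topology

noncomputable def oscillatoryRpow (N p y : ℝ) : ℂ :=
  Complex.exp (Complex.I * N * y) * ((y ^ p : ℝ) : ℂ)

section
variable {p : ℝ}

lemma norm_oscillatoryRpow (N p y : ℝ) : ‖oscillatoryRpow N p y‖ = |y ^ p| := by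
  simp [oscillatoryRpow, Complex.norm_exp]

lemma norm_oscillatoryRpow_of_nonneg (N p : ℝ) {y : ℝ} (hy : 0 ≤ y) :
    ‖oscillatoryRpow N p y‖ = y ^ p := by
  rw [norm_oscillatoryRpow, abs_of_nonneg (Real.rpow_nonneg hy p)]

lemma measurable_oscillatoryRpow (N p : ℝ) : Measurable (oscillatoryRpow N p) := by
  unfold oscillatoryRpow; fun_prop

lemma intervalIntegrable_oscillatoryRpow (N : ℝ) (hp : -1 < p) (c d : ℝ) :
    IntervalIntegrable (oscillatoryRpow N p) volume c d := by
  exact (intervalIntegrable_rpow' hp).mono_fun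
    (measurable_oscillatoryRpow N p).aestronglyMeasurable.restrict
    (ae_of_all _ fun y => (norm_oscillatoryRpow N p y).le)

lemma norm_integral_oscillatoryRpow_le (N : ℝ) (hp : -1 < p) {x a : ℝ} (hx : 0 ≤ x)
    (hxa : x ≤ a) : ‖∫ y in x..a, oscillatoryRpow N p y‖ ≤ a ^ (p + 1) / (p + 1) :=
  calc ‖∫ y in x..a, oscillatoryRpow N p y‖ ≤ ∫ y in x..a, ‖oscillatoryRpow N p y‖ :=
        norm_integral_le_integral_norm hxa
    _ = ∫ y in x..a, y ^ p := integral_congr fun y hy =>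
        norm_oscillatoryRpow_of_nonneg N p (hx.trans (uIcc_of_le hxa ▸ hy).1)
    _ = (a ^ (p + 1) - x ^ (p + 1)) / (p + 1) := integral_rpow (Or.inl hp)
    _ ≤ a ^ (p + 1) / (p + 1) := by
        gcongr
        · linarith
        · exact sub_le_self _ (Real.rpow_nonneg hx _)

lemma integral_oscillatoryRpow_eq {N : ℝ} (hN : N ≠ 0) (p : ℝ) {a T : ℝ} (ha : 0 < a)
    (haT : a ≤ T) :
    ∫ y in a..T, oscillatoryRpow N p y =
      (oscillatoryRpow N p T - oscillatoryRpow N p a) / (Complex.I * N) -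
        p / (Complex.I * N) * ∫ y in a..T, oscillatoryRpow N (p - 1) y := by
  set c : ℂ := Complex.I * N
  have hc : c ≠ 0 := mul_ne_zero Complex.I_ne_zero (Complex.ofReal_ne_zero.2 hN)
  have hpos : ∀ y ∈ uIcc a T, 0 < y := fun y hy => ha.trans_le (uIcc_of_le haT ▸ hy).1
  have hu : ∀ y ∈ uIcc a T, HasDerivAt (fun t : ℝ => ((t ^ p : ℝ) : ℂ))
      ((p * y ^ (p - 1) : ℝ) : ℂ) y := fun y hy =>
    (Real.hasDerivAt_rpow_const (Or.inl (hpos y hy).ne')).ofReal_comp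
  have hv : ∀ y ∈ uIcc a T, HasDerivAt (fun t : ℝ => Complex.exp (c * t) / c)
      (Complex.exp (c * y)) y := fun y _ => by
    simpa [hc] using ((Complex.ofRealCLM.hasDerivAt (x := y)).const_mul c).cexp.div_const c
  have hu' : IntervalIntegrable (fun y : ℝ => ((p * y ^ (p - 1) : ℝ) : ℂ)) volume a T :=
    ContinuousOn.intervalIntegrable fun y hy => by
      have := Real.continuousAt_rpow_const y (p - 1) (Or.inl (hpos y hy).ne')
      fun_prop
  have hv' : IntervalIntegrable (fun y : ℝ => Complex.exp (c * y)) volume a T :=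
    (by fun_prop : Continuous fun y : ℝ => Complex.exp (c * y)).intervalIntegrable _ _
  have hkernel : ∀ y, oscillatoryRpow N p y = ((y ^ p : ℝ) : ℂ) * Complex.exp (c * y) :=
    fun y => mul_comm _ _
  simp_rw [hkernel, integral_mul_deriv_eq_deriv_mul hu hv hu' hv',
    ← intervalIntegral.integral_const_mul]
  congr 1
  · ring
  · refine integral_congr fun y _ => ?_
    simp only [oscillatoryRpow]
    push_cast
    ring

lemma integrableOn_Ioi_oscillatoryRpow (N : ℝ) (hp : p < -1) {a : ℝ} (ha : 0 < a) :
    IntegrableOn (oscillatoryRpow N p) (Ioi a) :=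
  (integrableOn_Ioi_rpow_of_lt hp ha).mono'
    (measurable_oscillatoryRpow N p).aestronglyMeasurable.restrict
    ((ae_restrict_iff' measurableSet_Ioi).2 (ae_of_all _ fun _ hy =>
      (norm_oscillatoryRpow_of_nonneg N p (ha.trans hy).le).le))

lemma norm_integral_Ioi_oscillatoryRpow_le (N : ℝ) (hp : p < -1) {a : ℝ} (ha : 0 < a) :
    ‖∫ y in Ioi a, oscillatoryRpow N p y‖ ≤ a ^ (p + 1) / -(p + 1) :=
  calc _ ≤ ∫ y in Ioi a, ‖oscillatoryRpow N p y‖ :=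
        norm_integral_le_integral_norm _
    _ = ∫ y in Ioi a, y ^ p := setIntegral_congr_fun measurableSet_Ioi fun y hy =>
        norm_oscillatoryRpow_of_nonneg N p (ha.trans hy).le
    _ = a ^ (p + 1) / -(p + 1) := by rw [integral_Ioi_rpow_of_lt hp ha, div_neg, neg_div]

lemma tendsto_oscillatoryRpow_atTop (N : ℝ) (hp : p < 0) :
    Tendsto (oscillatoryRpow N p) atTop (𝓝 0) := by
  refine squeeze_zero_norm' ?_ (by simpa using tendsto_rpow_neg_atTop (neg_pos.2 hp))
  filter_upwards [eventually_ge_atTop 0] with y hy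
  exact (norm_oscillatoryRpow_of_nonneg N p hy).le

theorem exists_tendsto_integral_oscillatoryRpow {N : ℝ} (hN : N ≠ 0) (hp : p < 0) {a : ℝ}
    (ha : 0 < a) :
    ∃ L, Tendsto (fun T => ∫ y in a..T, oscillatoryRpow N p y) atTop (𝓝 L) ∧
      ‖L‖ ≤ 2 * a ^ p / |N| := by
  set c : ℂ := Complex.I * N
  have hc : ‖c‖ = |N| := by simp [c]
  have hp' : p - 1 < -1 := by linarith
  refine ⟨(0 - oscillatoryRpow N p a) / c - p / c * ∫ y in Ioi a, oscillatoryRpow N (p - 1) y,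
    ?_, ?_⟩
  · refine ((((tendsto_oscillatoryRpow_atTop N hp).sub_const _).div_const c).sub
      ((intervalIntegral_tendsto_integral_Ioi a
        (integrableOn_Ioi_oscillatoryRpow N hp' ha) tendsto_id).const_mul _)).congr' ?_
    filter_upwards [eventually_ge_atTop a] with T hT
    exact (integral_oscillatoryRpow_eq hN p ha hT).symm
  · have hJ := norm_integral_Ioi_oscillatoryRpow_le N hp' ha
    rw [sub_add_cancel] at hJ
    calc _ ≤ ‖(0 - oscillatoryRpow N p a) / c‖ +
          ‖p / c * ∫ y in Ioi a, oscillatoryRpow N (p - 1) y‖ := norm_sub_le _ _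
      _ ≤ a ^ p / |N| + -p / |N| * (a ^ p / -p) := by
          rw [zero_sub, norm_div, norm_neg, norm_oscillatoryRpow_of_nonneg N p ha.le, hc, norm_mul,
            norm_div, hc, Complex.norm_real, Real.norm_eq_abs, abs_of_neg hp]
          gcongr
          exact div_nonneg (neg_nonneg.2 hp.le) (abs_nonneg N)
      _ = 2 * a ^ p / |N| := by field_simp [hp.ne]; ring

theorem exists_tendsto_integral_oscillatoryRpow_of_mul_le_one {N : ℝ} (hN : N ≠ 0)
    (hp₁ : -1 < p) (hp₀ : p < 0) {x : ℝ} (hx : 0 ≤ x) (hNx : |N| * x ≤ 1) :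
    ∃ L, Tendsto (fun T => ∫ y in x..T, oscillatoryRpow N p y) atTop (𝓝 L) ∧
      ‖L‖ ≤ (1 / (p + 1) + 2) * |N| ^ (-(p + 1)) := by
  have hs : 0 < |N| := abs_pos.2 hN
  have hxa : x ≤ |N|⁻¹ := by rwa [← one_div, le_div_iff₀' hs]
  obtain ⟨L, hL, hLle⟩ := exists_tendsto_integral_oscillatoryRpow hN hp₀ (inv_pos.2 hs)
  refine ⟨(∫ y in x..|N|⁻¹, oscillatoryRpow N p y) + L,
    (tendsto_const_nhds.add hL).congr' (Eventually.of_forall fun T => ?_), ?_⟩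
  · exact integral_add_adjacent_intervals (intervalIntegrable_oscillatoryRpow N hp₁ _ _)
      (intervalIntegrable_oscillatoryRpow N hp₁ _ _)
  calc _ ≤ ‖∫ y in x..|N|⁻¹, oscillatoryRpow N p y‖ + ‖L‖ := norm_add_le _ _
    _ ≤ |N|⁻¹ ^ (p + 1) / (p + 1) + 2 * |N|⁻¹ ^ p / |N| :=
        add_le_add (norm_integral_oscillatoryRpow_le N hp₁ hx hxa) hLle
    _ = (1 / (p + 1) + 2) * |N| ^ (-(p + 1)) := by
        rw [Real.inv_rpow hs.le, Real.inv_rpow hs.le, Real.rpow_neg hs.le, Real.rpow_add hs,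
          Real.rpow_one]
        field_simp
end

lemma rpow_neg_half_le_two_mul {t u : ℝ} (ht : 0 < t) (htu : t ≤ u) (hu : u ≤ 4 * t) :
    t ^ (-(1:ℝ) / 2) ≤ 2 * u ^ (-(1:ℝ) / 2) := by
  have h4 : (4:ℝ) ^ (-(1:ℝ) / 2) = 2⁻¹ := by
    rw [show (4:ℝ) = 2 ^ (2:ℝ) by norm_num, ← Real.rpow_mul (by norm_num)]
    norm_num
  calc t ^ (-(1:ℝ) / 2) ≤ (u / 4) ^ (-(1:ℝ) / 2) :=
        Real.rpow_le_rpow_of_nonpos (by linarith) (by linarith) (by norm_num)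
    _ = 2 * u ^ (-(1:ℝ) / 2) := by
        rw [Real.div_rpow (ht.le.trans htu) (by norm_num), h4]
        ring

lemma rpow_neg_half_div_eq {s x : ℝ} (hs : 0 < s) (hx : 0 ≤ x) :
    x ^ (-(1:ℝ) / 2) / s = s ^ (-(1:ℝ) / 2) * (s * x) ^ (-(1:ℝ) / 2) := by
  rw [Real.mul_rpow hs.le hx, ← mul_assoc, ← Real.rpow_add hs]
  norm_num [Real.rpow_neg_one, div_eq_inv_mul]

/-- There is an absolute constant `C` such that for every `N ≠ 0` and `x ≥ 0` the improper
oscillatory integral `∫_x^∞ e^{iNy} y^{-1/2} dy` converges and its value `L` satisfies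
`|L| ≤ C |N|^{-1/2} (1 + |N| x)^{-1/2}`. -/
theorem stmt_13 :
    ∃ C > (0:ℝ), ∀ N x : ℝ, N ≠ 0 → 0 ≤ x →
      ∃ L : ℂ,
        Filter.Tendsto
          (fun T : ℝ => ∫ y in x..T,
            Complex.exp (Complex.I * (N : ℂ) * (y : ℂ)) * ((y ^ (-(1:ℝ) / 2) : ℝ) : ℂ))
          Filter.atTop (nhds L) ∧
        ‖L‖ ≤ C * |N| ^ (-(1:ℝ) / 2) * (1 + |N| * x) ^ (-(1:ℝ) / 2) := by
  refine ⟨8, by norm_num, fun N x hN hx => ?_⟩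
  have hs : 0 < |N| := abs_pos.2 hN
  rcases le_total (|N| * x) 1 with hNx | hNx
  · obtain ⟨L, hL, hLle⟩ := exists_tendsto_integral_oscillatoryRpow_of_mul_le_one
      (p := -(1:ℝ) / 2) hN (by norm_num) (by norm_num) hx hNx
    have h := rpow_neg_half_le_two_mul (u := 1 + |N| * x) one_pos
      (by linarith [mul_nonneg hs.le hx]) (by linarith)
    refine ⟨L, hL, hLle.trans ?_⟩
    calc (1 / (-(1:ℝ) / 2 + 1) + 2) * |N| ^ (-(-(1:ℝ) / 2 + 1))
        = 4 * |N| ^ (-(1:ℝ) / 2) * 1 := by norm_num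
      _ ≤ 4 * |N| ^ (-(1:ℝ) / 2) * (2 * (1 + |N| * x) ^ (-(1:ℝ) / 2)) := by
          gcongr
          simpa using h
      _ = _ := by ring
  · have hx0 : 0 < x := pos_of_mul_pos_right (by linarith) hs.le
    obtain ⟨L, hL, hLle⟩ := exists_tendsto_integral_oscillatoryRpow hN (p := -(1:ℝ) / 2)
      (by norm_num) hx0
    have h := rpow_neg_half_le_two_mul (by positivity) (le_add_of_nonneg_left zero_le_one)
      (by linarith : 1 + |N| * x ≤ 4 * (|N| * x))
    refine ⟨L, hL, hLle.trans ?_⟩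
    calc 2 * x ^ (-(1:ℝ) / 2) / |N| = 2 * |N| ^ (-(1:ℝ) / 2) * (|N| * x) ^ (-(1:ℝ) / 2) := by
          rw [mul_div_assoc, rpow_neg_half_div_eq hs hx, mul_assoc]
      _ ≤ 2 * |N| ^ (-(1:ℝ) / 2) * (2 * (1 + |N| * x) ^ (-(1:ℝ) / 2)) := by gcongr
      _ ≤ 8 * |N| ^ (-(1:ℝ) / 2) * (1 + |N| * x) ^ (-(1:ℝ) / 2) := by
          linarith [show 0 ≤ |N| ^ (-(1:ℝ) / 2) * (1 + |N| * x) ^ (-(1:ℝ) / 2) by positivity]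
end

section
/- Let ω ∈ C^∞([0,a]) be real with ω(0) = ω'(0) = 0 and ω''(y) ≥ κ > 0 on [0,a]. Set σ(y) = ω(y)^{1/2}/ω'(y) on (0,a]. Then the derivative σ'(y) = (ω'(y)² - 2ω(y)ω''(y)) / (2ω(y)^{1/2} ω'(y)²) satisfies |σ'(y)| ≤ 2^{-1/2} 3^{-1} κ^{-5/2} ω₂ ω₃ for all y ∈ (0,a], where ωₙ = max_{[0,a]} |ω^{(n)}|. -/
/-- If `f` is differentiable, `f 0 = 0` and `deriv f ≥ 0` on `[0,a]`, then `f ≥ 0` on `[0,a]`. -/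
lemma stmt_15_aux (a : ℝ) (f : ℝ → ℝ) (hf : Differentiable ℝ f)
    (hd : ∀ x ∈ Set.Icc (0:ℝ) a, 0 ≤ deriv f x) (h0 : f 0 = 0)
    {y : ℝ} (hy : y ∈ Set.Icc (0:ℝ) a) : 0 ≤ f y := by
  have h0a : (0:ℝ) ∈ Set.Icc (0:ℝ) a := ⟨le_refl 0, le_trans hy.1 hy.2⟩
  have hm : MonotoneOn f (Set.Icc (0:ℝ) a) :=
    monotoneOn_of_deriv_nonneg (convex_Icc 0 a) hf.continuous.continuousOn
      (fun x _ => (hf x).differentiableWithinAt)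
      (fun x hx => hd x (Set.Ioo_subset_Icc_self (by rwa [interior_Icc] at hx)))
  have := hm h0a hy hy.1
  linarith

set_option maxHeartbeats 1000000 in
/-- For `ω` smooth with `ω(0) = ω'(0) = 0` and `ω'' ≥ κ > 0` on `[0,a]`, the function
`σ(y) = ω(y)^{1/2}/ω'(y)` satisfies on `(0,a]`:
`σ'(y) = (ω'(y)² - 2ω(y)ω''(y)) / (2ω(y)^{1/2}ω'(y)²)` and
`|σ'(y)| ≤ 2^{-1/2} 3⁻¹ κ^{-5/2} ω₂ ω₃`. -/
theorem stmt_15 (a κ ω₂ ω₃ : ℝ) (ha : 0 < a) (hκ : 0 < κ) (ω : ℝ → ℝ)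
    (hω : ContDiff ℝ (⊤ : ℕ∞) ω) (h0 : ω 0 = 0) (h0' : deriv ω 0 = 0)
    (hconv : ∀ y ∈ Set.Icc (0:ℝ) a, κ ≤ deriv (deriv ω) y)
    (hω₂ : ∀ y ∈ Set.Icc (0:ℝ) a, |deriv (deriv ω) y| ≤ ω₂)
    (hω₃ : ∀ y ∈ Set.Icc (0:ℝ) a, |deriv (deriv (deriv ω)) y| ≤ ω₃)
    (σ : ℝ → ℝ) (hσ : ∀ y, σ y = Real.sqrt (ω y) / deriv ω y) :
    ∀ y ∈ Set.Ioc (0:ℝ) a,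
      deriv σ y = ((deriv ω y) ^ 2 - 2 * ω y * deriv (deriv ω) y) /
        (2 * Real.sqrt (ω y) * (deriv ω y) ^ 2) ∧
      |deriv σ y| ≤ (2:ℝ) ^ (-(1:ℝ) / 2) * 3⁻¹ * κ ^ (-(5:ℝ) / 2) * ω₂ * ω₃ := by
  -- smoothness of derivatives
  have hω' : ContDiff ℝ (↑(⊤:ℕ∞)) ω := hω.of_le (by simp)
  have hω1 : ContDiff ℝ (↑(⊤:ℕ∞)) (deriv ω) := (contDiff_infty_iff_deriv.mp hω').2
  have hω2 : ContDiff ℝ (↑(⊤:ℕ∞)) (deriv (deriv ω)) := (contDiff_infty_iff_deriv.mp hω1).2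
  have dω : Differentiable ℝ ω := hω'.differentiable (by simp)
  have dω1 : Differentiable ℝ (deriv ω) := hω1.differentiable (by simp)
  have dω2 : Differentiable ℝ (deriv (deriv ω)) := hω2.differentiable (by simp)
  set d1 := deriv ω with hd1def
  set d2 := deriv (deriv ω) with hd2def
  set d3 := deriv (deriv (deriv ω)) with hd3def
  have hωat : ∀ x, HasDerivAt ω (d1 x) x := fun x => (dω x).hasDerivAt
  have hd1at : ∀ x, HasDerivAt d1 (d2 x) x := fun x => (dω1 x).hasDerivAt
  have hd2at : ∀ x, HasDerivAt d2 (d3 x) x := fun x => (dω2 x).hasDerivAt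
  have hω₂0 : 0 ≤ ω₂ := le_trans (abs_nonneg _) (hω₂ 0 ⟨le_refl 0, ha.le⟩)
  have hω₃0 : 0 ≤ ω₃ := le_trans (abs_nonneg _) (hω₃ 0 ⟨le_refl 0, ha.le⟩)
  -- Step A : κ y ≤ ω'(y) on [0,a]
  have stepA : ∀ y ∈ Set.Icc (0:ℝ) a, κ * y ≤ d1 y := by
    intro y hy
    have := stmt_15_aux a (fun y => d1 y - κ * y) (dω1.sub (differentiable_id.const_mul κ))
      (fun x hx => by
        have : HasDerivAt (fun y => d1 y - κ * y) (d2 x - κ) x :=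
          (hd1at x).sub ((hasDerivAt_id x).const_mul κ |>.congr_deriv (by ring))
        rw [this.deriv]
        linarith [hconv x hx])
      (by simp [h0']) hy
    simpa using this
  -- Step B : κ y²/2 ≤ ω(y) on [0,a]
  have stepB : ∀ y ∈ Set.Icc (0:ℝ) a, κ * y ^ 2 / 2 ≤ ω y := by
    intro y hy
    have := stmt_15_aux a (fun y => ω y - κ * y ^ 2 / 2)
      (dω.sub (((differentiable_id.pow 2).const_mul κ).div_const 2))
      (fun x hx => by
        have : HasDerivAt (fun y => ω y - κ * y ^ 2 / 2) (d1 x - κ * x) x := by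
          have h1 : HasDerivAt (fun y : ℝ => κ * y ^ 2 / 2) (κ * x) x := by
            have := (((hasDerivAt_id x).pow 2).const_mul κ).div_const 2
            refine this.congr_deriv ?_; (first | (simp only [id_eq]; push_cast; ring) | (push_cast; ring) | ring)
          exact (hωat x).sub h1
        rw [this.deriv]
        linarith [stepA x hx])
      (by simp [h0]) hy
    simpa using this
  -- Step C : ω'(y) ≤ ω₂ y on [0,a]
  have stepC : ∀ y ∈ Set.Icc (0:ℝ) a, d1 y ≤ ω₂ * y := by
    intro y hy
    have := stmt_15_aux a (fun y => ω₂ * y - d1 y)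
      ((differentiable_id.const_mul ω₂).sub dω1)
      (fun x hx => by
        have : HasDerivAt (fun y => ω₂ * y - d1 y) (ω₂ - d2 x) x := by
          have h1 : HasDerivAt (fun y : ℝ => ω₂ * y) ω₂ x := by
            have := (hasDerivAt_id x).const_mul ω₂
            refine this.congr_deriv ?_; (first | (simp only [id_eq]; push_cast; ring) | (push_cast; ring) | ring)
          exact h1.sub (hd1at x)
        rw [this.deriv]
        have := hω₂ x hx
        have := abs_le.mp this
        linarith [this.2])
      (by simp [h0']) hy
    linarith
  -- Step D : ω(y) ≤ ω₂ y²/2 on [0,a]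
  have stepD : ∀ y ∈ Set.Icc (0:ℝ) a, ω y ≤ ω₂ * y ^ 2 / 2 := by
    intro y hy
    have := stmt_15_aux a (fun y => ω₂ * y ^ 2 / 2 - ω y)
      ((((differentiable_id.pow 2).const_mul ω₂).div_const 2).sub dω)
      (fun x hx => by
        have : HasDerivAt (fun y => ω₂ * y ^ 2 / 2 - ω y) (ω₂ * x - d1 x) x := by
          have h1 : HasDerivAt (fun y : ℝ => ω₂ * y ^ 2 / 2) (ω₂ * x) x := by
            have := (((hasDerivAt_id x).pow 2).const_mul ω₂).div_const 2
            refine this.congr_deriv ?_; (first | (simp only [id_eq]; push_cast; ring) | (push_cast; ring) | ring)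
          exact h1.sub (hωat x)
        rw [this.deriv]
        linarith [stepC x hx])
      (by simp [h0]) hy
    linarith
  -- the numerator function h and its derivative
  set h : ℝ → ℝ := fun y => d1 y ^ 2 - 2 * ω y * d2 y with hhdef
  have hhat : ∀ x, HasDerivAt h (-(2 * ω x * d3 x)) x := by
    intro x
    have A : HasDerivAt (fun y => d1 y ^ 2) (2 * d1 x ^ 1 * d2 x) x := (hd1at x).pow 2
    have B : HasDerivAt (fun y => 2 * ω y * d2 y)
        ((2 * d1 x) * d2 x + (2 * ω x) * d3 x) x :=
      ((hωat x).const_mul 2).mul (hd2at x)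
    have := A.sub B
    refine this.congr_deriv ?_
    ring
  have hh0 : h 0 = 0 := by simp [hhdef, h0, h0']
  have hhdiff : Differentiable ℝ h := fun x => (hhat x).differentiableAt
  -- bound on |ω| for the h'-bound
  have hωabs : ∀ x ∈ Set.Icc (0:ℝ) a, |2 * ω x * d3 x| ≤ ω₂ * ω₃ * x ^ 2 := by
    intro x hx
    have h1 : 0 ≤ ω x := le_trans (by positivity) (stepB x hx)
    have h2 : ω x ≤ ω₂ * x ^ 2 / 2 := stepD x hx
    have h3 : |d3 x| ≤ ω₃ := hω₃ x hx
    calc |2 * ω x * d3 x| = 2 * ω x * |d3 x| := by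
          rw [abs_mul, abs_of_nonneg (by linarith : (0:ℝ) ≤ 2 * ω x)]
      _ ≤ 2 * (ω₂ * x ^ 2 / 2) * ω₃ := by
          apply mul_le_mul (by linarith) h3 (abs_nonneg _) (by positivity)
      _ = ω₂ * ω₃ * x ^ 2 := by ring
  -- Step E/F : |h y| ≤ ω₂ ω₃ y³ / 3 on [0,a]
  have stepEF : ∀ y ∈ Set.Icc (0:ℝ) a, |h y| ≤ ω₂ * ω₃ * y ^ 3 / 3 := by
    intro y hy
    rw [abs_le]
    constructor
    · have := stmt_15_aux a (fun y => h y + ω₂ * ω₃ * y ^ 3 / 3)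
        (hhdiff.add (((differentiable_id.pow 3).const_mul (ω₂ * ω₃)).div_const 3))
        (fun x hx => by
          have hcub : HasDerivAt (fun y : ℝ => ω₂ * ω₃ * y ^ 3 / 3) (ω₂ * ω₃ * x ^ 2) x := by
            have := (((hasDerivAt_id x).pow 3).const_mul (ω₂ * ω₃)).div_const 3
            refine this.congr_deriv ?_; (first | (simp only [id_eq]; push_cast; ring) | (push_cast; ring) | ring)
          have : HasDerivAt (fun y => h y + ω₂ * ω₃ * y ^ 3 / 3)
              (-(2 * ω x * d3 x) + ω₂ * ω₃ * x ^ 2) x := (hhat x).add hcub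
          rw [this.deriv]
          have := abs_le.mp (hωabs x hx)
          linarith [this.1])
        (by simp [hh0]) hy
      linarith
    · have := stmt_15_aux a (fun y => ω₂ * ω₃ * y ^ 3 / 3 - h y)
        ((((differentiable_id.pow 3).const_mul (ω₂ * ω₃)).div_const 3).sub hhdiff)
        (fun x hx => by
          have hcub : HasDerivAt (fun y : ℝ => ω₂ * ω₃ * y ^ 3 / 3) (ω₂ * ω₃ * x ^ 2) x := by
            have := (((hasDerivAt_id x).pow 3).const_mul (ω₂ * ω₃)).div_const 3
            refine this.congr_deriv ?_; (first | (simp only [id_eq]; push_cast; ring) | (push_cast; ring) | ring)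
          have : HasDerivAt (fun y => ω₂ * ω₃ * y ^ 3 / 3 - h y)
              (ω₂ * ω₃ * x ^ 2 - -(2 * ω x * d3 x)) x := hcub.sub (hhat x)
          rw [this.deriv]
          have := abs_le.mp (hωabs x hx)
          linarith [this.2])
        (by simp [hh0]) hy
      linarith
  -- main goal
  intro y hy
  have hyIcc : y ∈ Set.Icc (0:ℝ) a := ⟨hy.1.le, hy.2⟩
  have hy0 : 0 < y := hy.1
  have hωpos : 0 < ω y := lt_of_lt_of_le (by positivity) (stepB y hyIcc)
  have hd1pos : 0 < d1 y := lt_of_lt_of_le (by positivity) (stepA y hyIcc)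
  have hspos : 0 < Real.sqrt (ω y) := Real.sqrt_pos.mpr hωpos
  have hs2 : Real.sqrt (ω y) ^ 2 = ω y := Real.sq_sqrt hωpos.le
  -- derivative of σ
  have hσf : σ = fun y => Real.sqrt (ω y) / d1 y := funext hσ
  have hsq : HasDerivAt (fun y => Real.sqrt (ω y)) (d1 y / (2 * Real.sqrt (ω y))) y :=
    (hωat y).sqrt hωpos.ne'
  have hdiv : HasDerivAt σ
      ((d1 y / (2 * Real.sqrt (ω y)) * d1 y - Real.sqrt (ω y) * d2 y) / d1 y ^ 2) y := by
    rw [hσf]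
    exact hsq.div (hd1at y) hd1pos.ne'
  have hform : deriv σ y = h y / (2 * Real.sqrt (ω y) * d1 y ^ 2) := by
    rw [hdiv.deriv, hhdef]
    field_simp
    linear_combination (-2 * d2 y) * hs2
  refine ⟨by rw [hform], ?_⟩
  -- the bound
  have hDpos : 0 < 2 * Real.sqrt (ω y) * d1 y ^ 2 := by positivity
  have habs : |deriv σ y| = |h y| / (2 * Real.sqrt (ω y) * d1 y ^ 2) := by
    rw [hform, abs_div, abs_of_pos hDpos]
  -- lower bound on the denominator
  have hsk : 0 < Real.sqrt κ := Real.sqrt_pos.mpr hκ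
  have hsk2 : Real.sqrt κ ^ 2 = κ := Real.sq_sqrt hκ.le
  have hs2' : Real.sqrt 2 ^ 2 = 2 := Real.sq_sqrt (by norm_num)
  have hs2pos : 0 < Real.sqrt 2 := Real.sqrt_pos.mpr (by norm_num)
  have hslb : Real.sqrt κ * y / Real.sqrt 2 ≤ Real.sqrt (ω y) := by
    have h1 : Real.sqrt (κ * y ^ 2 / 2) ≤ Real.sqrt (ω y) :=
      Real.sqrt_le_sqrt (stepB y hyIcc)
    have h2 : Real.sqrt (κ * y ^ 2 / 2) = Real.sqrt κ * y / Real.sqrt 2 := by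
      have he : κ * y ^ 2 / 2 = (Real.sqrt κ * y / Real.sqrt 2) ^ 2 := by
        rw [div_pow, mul_pow, hsk2, hs2']
      rw [he, Real.sqrt_sq (by positivity)]
    rw [← h2]; exact h1
  have hd1sq : κ ^ 2 * y ^ 2 ≤ d1 y ^ 2 := by
    have h := pow_le_pow_left₀ (by positivity : (0:ℝ) ≤ κ * y) (stepA y hyIcc) 2
    nlinarith [h]
  have hden : Real.sqrt 2 * (κ ^ 2 * Real.sqrt κ) * y ^ 3 ≤
      2 * Real.sqrt (ω y) * d1 y ^ 2 := by
    have h1 : 2 * (Real.sqrt κ * y / Real.sqrt 2) * (κ ^ 2 * y ^ 2) ≤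
        2 * Real.sqrt (ω y) * d1 y ^ 2 := by
      have ha1 : 0 ≤ Real.sqrt κ * y / Real.sqrt 2 := by positivity
      nlinarith [hslb, hd1sq, hspos.le]
    have h2 : Real.sqrt 2 * (κ ^ 2 * Real.sqrt κ) * y ^ 3 =
        2 * (Real.sqrt κ * y / Real.sqrt 2) * (κ ^ 2 * y ^ 2) := by
      field_simp
      linear_combination hs2'
    linarith [h2 ▸ h1]
  -- rpow identities
  have e1 : (2:ℝ) ^ (-(1:ℝ) / 2) = (Real.sqrt 2)⁻¹ := by
    rw [Real.sqrt_eq_rpow, show (-(1:ℝ) / 2) = -((1:ℝ)/2) by ring,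
      Real.rpow_neg (by norm_num : (0:ℝ) ≤ 2)]
  have e2 : κ ^ (-(5:ℝ) / 2) = (κ ^ 2 * Real.sqrt κ)⁻¹ := by
    have h5 : κ ^ ((5:ℝ) / 2) = κ ^ 2 * Real.sqrt κ := by
      rw [Real.sqrt_eq_rpow, show ((5:ℝ)/2) = (2:ℝ) + 1/2 by norm_num,
        Real.rpow_add hκ, Real.rpow_two]
      try norm_num
    have hneg : κ ^ (-(5:ℝ) / 2) = (κ ^ ((5:ℝ)/2))⁻¹ := by
      rw [show (-(5:ℝ) / 2) = -((5:ℝ)/2) by ring, Real.rpow_neg hκ.le]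
    rw [hneg, h5]
  -- combine
  rw [habs, e1, e2]
  have hnum : |h y| ≤ ω₂ * ω₃ * y ^ 3 / 3 := stepEF y hyIcc
  have key : |h y| / (2 * Real.sqrt (ω y) * d1 y ^ 2) ≤
      (ω₂ * ω₃ * y ^ 3 / 3) / (Real.sqrt 2 * (κ ^ 2 * Real.sqrt κ) * y ^ 3) := by
    apply div_le_div₀ (by positivity) hnum (by positivity) hden
  calc |h y| / (2 * Real.sqrt (ω y) * d1 y ^ 2)
      ≤ (ω₂ * ω₃ * y ^ 3 / 3) / (Real.sqrt 2 * (κ ^ 2 * Real.sqrt κ) * y ^ 3) := key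
    _ = (Real.sqrt 2)⁻¹ * 3⁻¹ * (κ ^ 2 * Real.sqrt κ)⁻¹ * ω₂ * ω₃ := by
        field_simp
end
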